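/- arXiv:1608.07700 — 7 statements merged into one kernel-verified Lean document; each statement's English description precedes it below -/
import Mathlib

section
/- Suppose there exists ε > 0 such that (Σ_{k=1}^{T} max_{|ξ| ≤ ε} F_k(ξ)) / ε^p < κ^p / p. Then there exists u ∈ H such that -(φ_p(u(k+1) - u(k)) - φ_p(u(k) - u(k-1))) = f(k, u(k)) for all k ∈ {1, ..., T}, and max_{k ∈ {1,...,T}} |u(k)| < ε. -/
/-!
Solutions are critical points of the energy
`J u = (1/p) ∑_{k=1}^{T+1} |u k - u (k-1)|^p - ∑_{k=1}^T F_k (u k)` on `H`.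
The discrete Sobolev inequality `κ^p |u k|^p ≤ ∑ |u k - u (k-1)|^p`, obtained from the two
telescoping sums to `u k` and Hölder's inequality, shows that the sublevel set
`{∑ |Δu|^p ≤ κ^p ε^p}` is compact and lies in `{‖u‖_∞ ≤ ε}`. On its boundary `J` exceeds
`κ^p ε^p / p - ∑_k max_{|ξ| ≤ ε} F_k(ξ) > 0 = J 0`, so `J` attains its minimum over it at an
interior point, where the Euler–Lagrange equations are the equations of the problem.
-/

open Finset Topology

noncomputable def discreteSobolevConst (T : ℕ) (p : ℝ) : ℝ :=
  if Even T then ((2 / (T : ℝ)) ^ (p - 1) + (2 / ((T : ℝ) + 2)) ^ (p - 1)) ^ (1 / p)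
  else 2 / ((T : ℝ) + 1) ^ ((p - 1) / p)

lemma discreteSobolevConst_pos (T : ℕ) (p : ℝ) : 0 < discreteSobolevConst T p := by
  unfold discreteSobolevConst
  split_ifs
  · have : 0 < (2 / ((T : ℝ) + 2)) ^ (p - 1) := by positivity
    positivity
  · positivity

lemma antitoneOn_rpow_add_rpow_sub {q S : ℝ} (hq : q ≤ 0) :
    AntitoneOn (fun t : ℝ => t ^ q + (S - t) ^ q) (Set.Ioc 0 (S / 2)) := by
  have hderiv : ∀ t, 0 < t → t < S →
      HasDerivAt (fun t : ℝ => t ^ q + (S - t) ^ q) (q * (t ^ (q - 1) - (S - t) ^ (q - 1))) t := by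
    intro t ht htS
    refine (((hasDerivAt_id t).rpow_const (Or.inl ht.ne')).add
      (((hasDerivAt_id t).const_sub S).rpow_const (Or.inl (sub_pos.2 htS).ne'))).congr_deriv ?_
    simp only [id]
    ring
  apply antitoneOn_of_deriv_nonpos (convex_Ioc 0 (S / 2))
  · exact fun t ht => (hderiv t ht.1 (by linarith [ht.1, ht.2])).continuousAt.continuousWithinAt
  · rw [interior_Ioc]
    exact fun t ht =>
      (hderiv t ht.1 (by linarith [ht.1, ht.2])).differentiableAt.differentiableWithinAt
  · rw [interior_Ioc]
    rintro t ⟨ht, htS⟩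
    rw [(hderiv t ht (by linarith)).deriv]
    have : (S - t) ^ (q - 1) ≤ t ^ (q - 1) :=
      Real.rpow_le_rpow_of_nonpos ht (by linarith) (by linarith)
    exact mul_nonpos_of_nonpos_of_nonneg hq (sub_nonneg.2 this)

lemma discreteSobolevConst_rpow {T : ℕ} {p : ℝ} (hp : 0 < p) :
    discreteSobolevConst T p ^ p =
      (((T + 1) / 2 : ℕ) : ℝ) ^ (1 - p) + ((T : ℝ) + 1 - ((T + 1) / 2 : ℕ)) ^ (1 - p) := by
  have inv_rpow_sub (x : ℝ) (hx : 0 ≤ x) : x⁻¹ ^ (p - 1) = x ^ (1 - p) := by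
    rw [Real.inv_rpow hx, ← Real.rpow_neg hx, neg_sub]
  unfold discreteSobolevConst
  split_ifs with hT
  · obtain ⟨n, rfl⟩ := hT
    rw [← Real.rpow_mul (by positivity), one_div_mul_cancel hp.ne', Real.rpow_one,
      show (n + n + 1) / 2 = n by omega]
    push_cast
    rw [show 2 / ((n : ℝ) + n) = (n : ℝ)⁻¹ by field_simp; ring,
      show 2 / ((n : ℝ) + n + 2) = ((n : ℝ) + 1)⁻¹ by field_simp; ring,
      inv_rpow_sub _ n.cast_nonneg, inv_rpow_sub _ (by positivity)]
    ring_nf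
  · obtain ⟨n, rfl⟩ := Nat.not_even_iff_odd.1 hT
    rw [show (2 * n + 1 + 1) / 2 = n + 1 by omega]
    push_cast
    have hn : (0 : ℝ) < n + 1 := by positivity
    rw [show (2 : ℝ) * n + 1 + 1 = 2 * (n + 1) by ring,
      show 2 * ((n : ℝ) + 1) - (n + 1) = n + 1 by ring,
      Real.div_rpow zero_le_two (by positivity), ← Real.rpow_mul (by positivity),
      div_mul_cancel₀ _ hp.ne', Real.mul_rpow zero_le_two hn.le, ← neg_sub p 1,
      Real.rpow_neg hn.le, Real.rpow_sub_one two_ne_zero]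
    have : 0 < (n + 1 : ℝ) ^ (p - 1) := by positivity
    field_simp
    ring

lemma discreteSobolevConst_rpow_le {T k : ℕ} {p : ℝ} (hp : 1 < p) (hk : 1 ≤ k) (hkT : k ≤ T) :
    discreteSobolevConst T p ^ p ≤ (k : ℝ) ^ (1 - p) + ((T : ℝ) + 1 - k) ^ (1 - p) := by
  have hanti := antitoneOn_rpow_add_rpow_sub (S := (T : ℝ) + 1) (by linarith : 1 - p ≤ 0)
  have hmem (j : ℕ) (hj : 1 ≤ j) (hjT : 2 * j ≤ T + 1) :
      (j : ℝ) ∈ Set.Ioc 0 (((T : ℝ) + 1) / 2) := by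
    have : (2 * j : ℝ) ≤ T + 1 := by exact_mod_cast hjT
    exact ⟨by positivity, by linarith⟩
  have hmid := hmem ((T + 1) / 2) (by omega) (by omega)
  rw [discreteSobolevConst_rpow (by linarith)]
  rcases le_or_gt k ((T + 1) / 2) with hkm | hkm
  · exact hanti (hmem k hk (by omega)) hmid (by exact_mod_cast hkm)
  · have := hanti (hmem (T + 1 - k) (by omega) (by omega)) hmid
      (by exact_mod_cast (by omega : T + 1 - k ≤ (T + 1) / 2))
    rw [Nat.cast_sub (by omega)] at this
    push_cast at this
    refine this.trans (le_of_eq ?_)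
    rw [add_comm]
    ring_nf

noncomputable def dirichletEnergy (n : ℕ) (p : ℝ) (u : ℕ → ℝ) : ℝ :=
  ∑ m ∈ range n, |u (m + 1) - u m| ^ p

lemma abs_sum_rpow_mul_card_rpow_le {ι : Type*} {s : Finset ι} (hs : s.Nonempty) (a : ι → ℝ)
    {p : ℝ} (hp : 1 ≤ p) :
    |∑ i ∈ s, a i| ^ p * (#s : ℝ) ^ (1 - p) ≤ ∑ i ∈ s, |a i| ^ p := by
  have hcard : (0 : ℝ) < #s := by exact_mod_cast hs.card_pos
  have hpow : |∑ i ∈ s, a i| ^ p ≤ (#s : ℝ) ^ (p - 1) * ∑ i ∈ s, |a i| ^ p :=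
    (Real.rpow_le_rpow (abs_nonneg _) (abs_sum_le_sum_abs a s) (by linarith)).trans
      (Real.rpow_sum_le_const_mul_sum_rpow s a hp)
  calc |∑ i ∈ s, a i| ^ p * (#s : ℝ) ^ (1 - p)
      ≤ (#s : ℝ) ^ (p - 1) * (∑ i ∈ s, |a i| ^ p) * (#s : ℝ) ^ (1 - p) := by gcongr
    _ = ∑ i ∈ s, |a i| ^ p := by
      rw [mul_right_comm, ← Real.rpow_add hcard]
      norm_num

lemma abs_rpow_mul_le_dirichletEnergy {p : ℝ} (hp : 1 ≤ p) {n k : ℕ} {u : ℕ → ℝ}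
    (h0 : u 0 = 0) (hn : u n = 0) (hk : 0 < k) (hkn : k < n) :
    |u k| ^ p * ((k : ℝ) ^ (1 - p) + ((n : ℝ) - k) ^ (1 - p)) ≤ dirichletEnergy n p u := by
  have left := abs_sum_rpow_mul_card_rpow_le (nonempty_range_iff.2 hk.ne')
    (fun m => u (m + 1) - u m) hp
  have right := abs_sum_rpow_mul_card_rpow_le (nonempty_Ico.2 hkn) (fun m => u (m + 1) - u m) hp
  rw [sum_range_sub, h0, sub_zero, card_range] at left
  rw [sum_Ico_sub _ hkn.le, hn, zero_sub, abs_neg, Nat.card_Ico, Nat.cast_sub hkn.le] at right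
  rw [dirichletEnergy, ← sum_range_add_sum_Ico _ hkn.le, mul_add]
  exact add_le_add left right

/-- The space `H`, extended by zero beyond `T + 1` so that bounded closed subsets are compact
in the product topology of `ℕ → ℝ`. -/
def dirichletSpace (T : ℕ) : Set (ℕ → ℝ) := {u | u 0 = 0 ∧ ∀ m, T < m → u m = 0}

def dirichletSublevel (T : ℕ) (p r : ℝ) : Set (ℕ → ℝ) :=
  {u ∈ dirichletSpace T | dirichletEnergy (T + 1) p u ≤ r}

lemma continuous_dirichletEnergy (n : ℕ) {p : ℝ} (hp : 0 ≤ p) :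
    Continuous (dirichletEnergy n p) :=
  continuous_finsetSum _ fun m _ =>
    ((continuous_apply (m + 1)).sub (continuous_apply m)).abs.rpow_const fun _ => Or.inr hp

lemma isClosed_dirichletSpace (T : ℕ) : IsClosed (dirichletSpace T) := by
  simp only [dirichletSpace, Set.ofPred_and, Set.ofPred_forall]
  exact (isClosed_eq (continuous_apply 0) continuous_const).inter <| isClosed_iInter fun m =>
    isClosed_iInter fun _ => isClosed_eq (continuous_apply m) continuous_const

lemma isCompact_dirichletSublevel {T : ℕ} {p r ε : ℝ} (hp : 0 ≤ p)
    (hbound : ∀ u ∈ dirichletSublevel T p r, ∀ m, |u m| ≤ ε) :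
    IsCompact (dirichletSublevel T p r) := by
  refine (isCompact_univ_pi fun _ => isCompact_Icc (a := -ε) (b := ε)).of_isClosed_subset
    ((isClosed_dirichletSpace T).inter
      (isClosed_le (continuous_dirichletEnergy _ hp) continuous_const)) ?_
  exact fun u hu m _ => abs_le.1 (hbound u hu m)

lemma zero_mem_dirichletSublevel {T : ℕ} {p r : ℝ} (hp : 0 < p) (hr : 0 ≤ r) :
    (0 : ℕ → ℝ) ∈ dirichletSublevel T p r := by
  refine ⟨⟨rfl, fun _ _ => rfl⟩, ?_⟩
  simpa [dirichletEnergy, Real.zero_rpow hp.ne'] using hr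

lemma discreteSobolevConst_rpow_mul_abs_rpow_le {T k : ℕ} {p : ℝ} (hp : 1 < p) {u : ℕ → ℝ}
    (hu : u ∈ dirichletSpace T) (hk : k ∈ Icc 1 T) :
    discreteSobolevConst T p ^ p * |u k| ^ p ≤ dirichletEnergy (T + 1) p u := by
  obtain ⟨hk1, hkT⟩ := mem_Icc.1 hk
  have hsobolev := abs_rpow_mul_le_dirichletEnergy hp.le hu.1 (hu.2 _ (by omega)) hk1
    (by omega : k < T + 1)
  push_cast at hsobolev
  rw [mul_comm]
  exact (mul_le_mul_of_nonneg_left (discreteSobolevConst_rpow_le hp hk1 hkT)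
    (by positivity)).trans hsobolev

lemma abs_lt_of_dirichletEnergy_lt {T k : ℕ} {p ε : ℝ} (hp : 1 < p) (hε : 0 ≤ ε) {u : ℕ → ℝ}
    (hu : u ∈ dirichletSpace T) (hk : k ∈ Icc 1 T)
    (hE : dirichletEnergy (T + 1) p u < discreteSobolevConst T p ^ p * ε ^ p) : |u k| < ε := by
  have hκ := Real.rpow_pos_of_pos (discreteSobolevConst_pos T p) p
  have := lt_of_mul_lt_mul_left
    ((discreteSobolevConst_rpow_mul_abs_rpow_le hp hu hk).trans_lt hE) hκ.le
  exact (Real.rpow_lt_rpow_iff (abs_nonneg _) hε (by linarith)).1 this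

lemma abs_le_of_mem_dirichletSublevel {T : ℕ} {p ε : ℝ} (hp : 1 < p) (hε : 0 ≤ ε) {u : ℕ → ℝ}
    (hu : u ∈ dirichletSublevel T p (discreteSobolevConst T p ^ p * ε ^ p)) (m : ℕ) :
    |u m| ≤ ε := by
  by_cases hm : m ∈ Icc 1 T
  · have hκ := Real.rpow_pos_of_pos (discreteSobolevConst_pos T p) p
    have := le_of_mul_le_mul_left
      ((discreteSobolevConst_rpow_mul_abs_rpow_le hp hu.1 hm).trans hu.2) hκ
    exact (Real.rpow_le_rpow_iff (abs_nonneg _) hε (by linarith)).1 this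
  · obtain rfl | hTm : m = 0 ∨ T < m := by simp only [mem_Icc] at hm; omega
    · simpa [hu.1.1] using hε
    · simpa [hu.1.2 m hTm] using hε

noncomputable def pLaplacianEnergy (T : ℕ) (p : ℝ) (F : ℕ → ℝ → ℝ) (u : ℕ → ℝ) : ℝ :=
  dirichletEnergy (T + 1) p u / p - ∑ m ∈ Icc 1 T, F m (u m)

lemma exists_dirichletEnergy_lt_isMinOn_pLaplacianEnergy {T : ℕ} {p r ε : ℝ} (hp : 0 < p)
    (hr : 0 ≤ r) {F : ℕ → ℝ → ℝ} (hFc : ∀ m ∈ Icc 1 T, Continuous (F m))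
    (hF0 : ∀ m ∈ Icc 1 T, F m 0 = 0)
    (hbound : ∀ u ∈ dirichletSublevel T p r, ∀ m, |u m| ≤ ε)
    (hsup : ∑ m ∈ Icc 1 T, sSup (F m '' Set.Icc (-ε) ε) < r / p) :
    ∃ v ∈ dirichletSublevel T p r, dirichletEnergy (T + 1) p v < r ∧
      IsMinOn (pLaplacianEnergy T p F) (dirichletSublevel T p r) v := by
  have hcont : Continuous (pLaplacianEnergy T p F) :=
    ((continuous_dirichletEnergy _ hp.le).div_const p).sub
      (continuous_finsetSum _ fun m hm => (hFc m hm).comp (continuous_apply m))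
  have h0 := zero_mem_dirichletSublevel (T := T) hp hr
  obtain ⟨v, hv, hvmin⟩ :=
    (isCompact_dirichletSublevel hp.le hbound).exists_isMinOn ⟨0, h0⟩ hcont.continuousOn
  refine ⟨v, hv, hv.2.lt_of_ne fun hvr => ?_, hvmin⟩
  have hF_le : ∑ m ∈ Icc 1 T, F m (v m) ≤ ∑ m ∈ Icc 1 T, sSup (F m '' Set.Icc (-ε) ε) :=
    sum_le_sum fun m hm => le_csSup
      (isCompact_Icc.image (hFc m hm)).bddAbove ⟨v m, abs_le.1 (hbound v hv m), rfl⟩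
  have hv_le : pLaplacianEnergy T p F v ≤ pLaplacianEnergy T p F 0 := hvmin h0
  have henergy0 : pLaplacianEnergy T p F 0 = 0 := by
    simp [pLaplacianEnergy, dirichletEnergy, Real.zero_rpow hp.ne', sum_eq_zero hF0]
  rw [henergy0, pLaplacianEnergy, hvr] at hv_le
  linarith

lemma hasDerivAt_add_smul_single_apply (u : ℕ → ℝ) (k j : ℕ) :
    HasDerivAt (fun t : ℝ => (u + t • Pi.single k 1 : ℕ → ℝ) j) ((Pi.single k 1 : ℕ → ℝ) j) 0 := by
  simpa using ((hasDerivAt_id (0 : ℝ)).mul_const ((Pi.single k 1 : ℕ → ℝ) j)).const_add (u j)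

lemma hasDerivAt_dirichletEnergy_add_smul_single {p : ℝ} (hp : 1 < p) (u : ℕ → ℝ) {n k : ℕ}
    (hk : 0 < k) (hkn : k < n) :
    HasDerivAt (fun t : ℝ => dirichletEnergy n p (u + t • Pi.single k 1))
      (p * (|u k - u (k - 1)| ^ (p - 2) * (u k - u (k - 1))
        - |u (k + 1) - u k| ^ (p - 2) * (u (k + 1) - u k))) 0 := by
  set e : ℕ → ℝ := Pi.single k 1
  set c : ℕ → ℝ := fun m => p * |u (m + 1) - u m| ^ (p - 2) * (u (m + 1) - u m)
  have hterm (m : ℕ) : HasDerivAt (fun t : ℝ => |(u + t • e) (m + 1) - (u + t • e) m| ^ p)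
      (c m * (e (m + 1) - e m)) 0 :=
    (hasDerivAt_abs_rpow _ hp).comp_of_eq 0
      ((hasDerivAt_add_smul_single_apply u k (m + 1)).fun_sub
        (hasDerivAt_add_smul_single_apply u k m)) (by simp)
  have hsum := HasDerivAt.fun_sum (u := range n) fun m _ => hterm m
  have hcollapse : ∑ m ∈ range n, c m * (e (m + 1) - e m) = c (k - 1) - c k := by
    simp_rw [mul_sub, sum_sub_distrib]
    rw [sum_eq_single_of_mem (k - 1) (mem_range.2 (by omega)) fun m _ hm => by
        simp [e, show m + 1 ≠ k by omega],
      sum_eq_single_of_mem k (mem_range.2 hkn) fun m _ hm => by simp [e, hm]]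
    simp [e, Nat.sub_add_cancel hk]
  rw [hcollapse] at hsum
  refine hsum.congr_deriv ?_
  simp only [c, Nat.sub_add_cancel hk]
  ring

lemma pLaplacianEnergy_eulerLagrange {T k : ℕ} {p : ℝ} (hp : 1 < p) {F f : ℕ → ℝ → ℝ}
    {u : ℕ → ℝ} (hF : ∀ m ∈ Icc 1 T, HasDerivAt (F m) (f m (u m)) (u m)) (hk : k ∈ Icc 1 T)
    (hmin : IsLocalMin (fun t : ℝ => pLaplacianEnergy T p F (u + t • Pi.single k 1)) 0) :
    -(|u (k + 1) - u k| ^ (p - 2) * (u (k + 1) - u k)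
      - |u k - u (k - 1)| ^ (p - 2) * (u k - u (k - 1))) = f k (u k) := by
  obtain ⟨hk1, hkT⟩ := mem_Icc.1 hk
  have hpotential : HasDerivAt
      (fun t : ℝ => ∑ m ∈ Icc 1 T, F m ((u + t • Pi.single k 1 : ℕ → ℝ) m)) (f k (u k)) 0 := by
    refine (HasDerivAt.fun_sum fun m hm => (hF m hm).comp_of_eq 0
      (hasDerivAt_add_smul_single_apply u k m) (by simp)).congr_deriv ?_
    rw [sum_eq_single_of_mem k hk fun m _ hm => by simp [hm]]
    simp
  have hderiv := ((hasDerivAt_dirichletEnergy_add_smul_single hp u (n := T + 1) hk1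
    (by omega)).div_const p).fun_sub hpotential
  have := hmin.hasDerivAt_eq_zero hderiv
  field_simp at this
  linarith

lemma IsMinOn.isLocalMin_add_smul_single {T k : ℕ} {p r : ℝ} (hp : 0 ≤ p) {J : (ℕ → ℝ) → ℝ}
    {v : ℕ → ℝ} (hmin : IsMinOn J (dirichletSublevel T p r) v) (hv : v ∈ dirichletSpace T)
    (hvr : dirichletEnergy (T + 1) p v < r) (hk : k ∈ Icc 1 T) :
    IsLocalMin (fun t : ℝ => J (v + t • Pi.single k 1)) 0 := by
  obtain ⟨hk1, hkT⟩ := mem_Icc.1 hk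
  have hline : Continuous fun t : ℝ => (v + t • Pi.single k 1 : ℕ → ℝ) :=
    continuous_const.add (continuous_id.smul continuous_const)
  have hnear : ∀ᶠ t in 𝓝 (0 : ℝ), dirichletEnergy (T + 1) p (v + t • Pi.single k 1) < r :=
    Filter.Tendsto.eventually_lt_const hvr
      (by simpa [Function.comp_def] using ((continuous_dirichletEnergy _ hp).comp hline).tendsto 0)
  filter_upwards [hnear] with t ht
  have hmem : v + t • Pi.single k 1 ∈ dirichletSublevel T p r :=
    ⟨⟨by simp [hv.1, show (0 : ℕ) ≠ k by omega],
      fun m hm => by simp [hv.2 m hm, show m ≠ k by omega]⟩, ht.le⟩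
  simpa using hmin hmem

theorem discrete_pLaplacian_existence_general
    (T : ℕ) (p : ℝ) (hp : 1 < p)
    (f : ℕ → ℝ → ℝ) (hf : ∀ k ∈ Finset.Icc 1 T, Continuous (f k))
    (φ : ℝ → ℝ) (hφ : ∀ s : ℝ, φ s = |s| ^ (p - 2) * s)
    (F : ℕ → ℝ → ℝ) (hF : ∀ k : ℕ, ∀ ξ : ℝ, F k ξ = ∫ s in (0:ℝ)..ξ, f k s)
    (κ : ℝ)
    (hκ : κ = if Even T
      then ((2 / (T : ℝ)) ^ (p - 1) + (2 / ((T : ℝ) + 2)) ^ (p - 1)) ^ (1 / p)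
      else 2 / ((T : ℝ) + 1) ^ ((p - 1) / p))
    (ε : ℝ) (hε : 0 < ε)
    (hcond : (∑ k ∈ Finset.Icc 1 T, sSup (F k '' Set.Icc (-ε) ε)) / ε ^ p < κ ^ p / p) :
    ∃ u : ℕ → ℝ, u 0 = 0 ∧ u (T + 1) = 0 ∧
      (∀ k ∈ Finset.Icc 1 T,
        -(φ (u (k + 1) - u k) - φ (u k - u (k - 1))) = f k (u k)) ∧
      (∀ k ∈ Finset.Icc 1 T, |u k| < ε) := by
  obtain rfl : κ = discreteSobolevConst T p := hκ
  have hFderiv (k : ℕ) (hk : k ∈ Icc 1 T) (x : ℝ) : HasDerivAt (F k) (f k x) x := by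
    rw [funext (hF k)]
    exact ((hf k hk).integral_hasStrictDerivAt 0 x).hasDerivAt
  have hr : 0 ≤ discreteSobolevConst T p ^ p * ε ^ p :=
    mul_nonneg (Real.rpow_pos_of_pos (discreteSobolevConst_pos T p) p).le (by positivity)
  rw [div_lt_iff₀ (by positivity), div_mul_eq_mul_div] at hcond
  obtain ⟨v, hv, hvr, hvmin⟩ :=
    exists_dirichletEnergy_lt_isMinOn_pLaplacianEnergy (by linarith) hr
    (fun k hk => continuous_iff_continuousAt.2 fun x => (hFderiv k hk x).continuousAt)
    (fun k _ => by rw [hF, intervalIntegral.integral_same])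
    (fun u hu => abs_le_of_mem_dirichletSublevel hp hε.le hu) hcond
  refine ⟨v, hv.1.1, hv.1.2 _ (by omega), fun k hk => ?_,
    fun k hk => abs_lt_of_dirichletEnergy_lt hp hε.le hv.1 hk hvr⟩
  rw [hφ, hφ]
  exact pLaplacianEnergy_eulerLagrange hp (fun m hm => hFderiv m hm (v m)) hk
    (hvmin.isLocalMin_add_smul_single (by linarith) hv.1 hvr hk)

/-- Theorem `Esistenza`. Let `T ≥ 2`, `p > 1`, `f : ℤ[1,T] × ℝ → ℝ`
continuous, `F k ξ = ∫_0^ξ f(k,s) ds`, and `κ` as in the paper. If there is `ε > 0` with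
`(∑_{k=1}^T max_{|ξ| ≤ ε} F k ξ) / ε^p < κ^p / p`, then the problem `(D_f)` has a
solution `u` with `‖u‖_∞ < ε`. -/
theorem discrete_pLaplacian_existence
    (T : ℕ) (hT : 2 ≤ T) (p : ℝ) (hp : 1 < p)
    (f : ℕ → ℝ → ℝ) (hf : ∀ k ∈ Finset.Icc 1 T, Continuous (f k))
    (φ : ℝ → ℝ) (hφ : ∀ s : ℝ, φ s = |s| ^ (p - 2) * s)
    (F : ℕ → ℝ → ℝ) (hF : ∀ k : ℕ, ∀ ξ : ℝ, F k ξ = ∫ s in (0:ℝ)..ξ, f k s)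
    (κ : ℝ)
    (hκ : κ = if Even T
      then ((2 / (T : ℝ)) ^ (p - 1) + (2 / ((T : ℝ) + 2)) ^ (p - 1)) ^ (1 / p)
      else 2 / ((T : ℝ) + 1) ^ ((p - 1) / p))
    (ε : ℝ) (hε : 0 < ε)
    (hcond : (∑ k ∈ Finset.Icc 1 T, sSup (F k '' Set.Icc (-ε) ε)) / ε ^ p < κ ^ p / p) :
    ∃ u : ℕ → ℝ, u 0 = 0 ∧ u (T + 1) = 0 ∧
      (∀ k ∈ Finset.Icc 1 T,
        -(φ (u (k + 1) - u k) - φ (u k - u (k - 1))) = f k (u k)) ∧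
      (∀ k ∈ Finset.Icc 1 T, |u k| < ε) :=
  discrete_pLaplacian_existence_general T p hp f hf φ hφ F hF κ hκ ε hε hcond
end

section
/- Assume lim_{ξ → +∞} (Σ_{k=1}^{T} F_k(ξ)) / ξ^p = 0, and that γ_k := liminf_{ξ → 0^+} F_k(ξ) / ξ^p > 0 for every k ∈ {1, ..., T}. Then for every real α > λ_{1,p} / (p · min_{k ∈ {1,...,T}} γ_k), there exists u ∈ H with u(k) > 0 for all k ∈ {1, ..., T} such that -(φ_p(u(k+1) - u(k)) - φ_p(u(k) - u(k-1))) = α f(k, u(k)) for all k ∈ {1, ..., T}. -/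
open Real Filter Finset Topology

/-!
Solutions are the critical points of `E(u) = (1/p) ∑ |Δu|^p - α ∑ G_k(u(k))` on `H`, where
`G_k` is the primitive of `s ↦ f(k, max s 0)`. Because `∑ F_k(ξ) = o(ξ^p)` at infinity and
`∑ |Δu|^p ≥ λ_{1,p} ∑ |u|^p` on `H`, the energy is coercive on the finite-dimensional space `H`,
so it has a global minimiser `u`. Along `t|w|`, with `w` a first eigenfunction and
`λ_{1,p}/(pα) < c < min_k γ_k`, the energy is at most `t^p ∑|w|^p (λ_{1,p}/p - α c) < 0` for
small `t > 0`, hence `u ≠ 0`. The Euler–Lagrange equation and `f ≥ 0` make `φ_p(Δu)`, hence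
`Δu`, nonincreasing, so `u` is a nonzero concave sequence vanishing at both ends and therefore
positive inside, where the truncation is invisible.
-/

namespace DiscretePLaplacian

noncomputable def phiP (p s : ℝ) : ℝ := |s| ^ (p - 2) * s

theorem phiP_of_nonneg {p s : ℝ} (hp : p ≠ 1) (hs : 0 ≤ s) : phiP p s = s ^ (p - 1) := by
  rw [phiP, abs_of_nonneg hs]
  rcases hs.eq_or_lt with rfl | hs
  · simp [zero_rpow (sub_ne_zero.2 hp)]
  · rw [← rpow_add_one hs.ne']
    ring_nf

theorem strictMono_phiP {p : ℝ} (hp : 1 < p) : StrictMono (phiP p) :=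
  strictMono_of_odd_strictMonoOn_nonneg (fun s => by simp [phiP])
    fun a ha b hb hab => by
      rw [phiP_of_nonneg hp.ne' ha, phiP_of_nonneg hp.ne' hb]
      exact strictMonoOn_rpow_Ici_of_exponent_pos (by linarith) ha hb hab

theorem antitoneOn_Iio_of_succ_le {β : Type*} [Preorder β] {f : ℕ → β} {N : ℕ}
    (hf : ∀ i, i + 1 < N → f (i + 1) ≤ f i) : AntitoneOn f (Set.Iio N) := by
  intro i _ j hj hij
  induction j, hij using Nat.le_induction with
  | base => exact le_rfl
  | succ k hik ih => exact (hf k hj).trans (ih (by simp at hj ⊢; omega))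

theorem chord_le_of_antitoneOn_sub {u : ℕ → ℝ} {N n : ℕ}
    (hu : AntitoneOn (fun i => u (i + 1) - u i) (Set.Iio N)) (hn : n < N) :
    ((N : ℝ) - n) * u 0 + n * u N ≤ N * u n := by
  have hleft : (n : ℝ) * (u (n + 1) - u n) ≤ u n - u 0 := by
    rw [← sum_range_sub]
    simpa using card_nsmul_le_sum (range n) _ _ fun i hi =>
      hu (by simp at hi ⊢; omega) hn (mem_range.1 hi).le
  have hright : u N - u n ≤ ((N : ℝ) - n) * (u (n + 1) - u n) := by
    rw [← sum_Ico_sub u hn.le]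
    simpa [Nat.cast_sub hn.le] using sum_le_card_nsmul (Ico n N) _ _ fun j hj =>
      hu hn (by simp at hj ⊢; omega) (mem_Ico.1 hj).1
  have hNn : (0 : ℝ) ≤ N - n := by
    rw [sub_nonneg]; exact_mod_cast hn.le
  nlinarith [mul_le_mul_of_nonneg_left hleft hNn,
    mul_le_mul_of_nonneg_left hright (Nat.cast_nonneg n)]

theorem pos_of_antitoneOn_sub {u : ℕ → ℝ} {N m : ℕ}
    (hu : AntitoneOn (fun i => u (i + 1) - u i) (Set.Iio N)) (h0 : u 0 = 0) (hN : u N = 0)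
    (hmN : m ≤ N) (hm : u m ≠ 0) {n : ℕ} (hn : 0 < n) (hnN : n < N) : 0 < u n := by
  have hnonneg : ∀ i < N, 0 ≤ u i := fun i hi => by
    have := chord_le_of_antitoneOn_sub hu hi
    rw [h0, hN] at this
    exact nonneg_of_mul_nonneg_right (by simpa using this) (by exact_mod_cast hn.trans hnN)
  have hmN' : m < N := hmN.lt_of_ne (by rintro rfl; exact hm hN)
  have hm_pos : 0 < u m := (hnonneg m hmN').lt_of_ne' hm
  rcases le_or_gt m n with hmn | hnm
  · have hshift : AntitoneOn (fun i => u (m + i + 1) - u (m + i)) (Set.Iio (N - m)) :=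
      fun i hi j hj hij => hu (by simp at hi ⊢; omega) (by simp at hj ⊢; omega) (by omega)
    have := chord_le_of_antitoneOn_sub (u := fun i => u (m + i)) hshift (n := n - m) (by omega)
    simp only [add_zero, Nat.add_sub_cancel' hmN, Nat.add_sub_cancel' hmn, hN,
      Nat.cast_sub hmN, Nat.cast_sub hmn] at this
    have hpos : (0 : ℝ) < (N - n) * u m := mul_pos (by simp; exact_mod_cast hnN) hm_pos
    exact pos_of_mul_pos_right (a := (N : ℝ) - m) (by linarith) (by simp; exact_mod_cast hmN)
  · have := chord_le_of_antitoneOn_sub (hu.mono (Set.Iio_subset_Iio hmN)) hnm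
    rw [h0] at this
    have hpos : (0 : ℝ) < n * u m := mul_pos (by exact_mod_cast hn) hm_pos
    exact pos_of_mul_pos_right (by nlinarith) (Nat.cast_nonneg m)

variable {T : ℕ} {p α : ℝ}

def zeroBoundary (T : ℕ) : Set (ℕ → ℝ) := {u | u 0 = 0 ∧ u (T + 1) = 0}

noncomputable def dirichletSum (T : ℕ) (p : ℝ) (u : ℕ → ℝ) : ℝ :=
  ∑ k ∈ Icc 1 (T + 1), |u k - u (k - 1)| ^ p

noncomputable def lpSum (T : ℕ) (p : ℝ) (u : ℕ → ℝ) : ℝ := ∑ k ∈ Icc 1 T, |u k| ^ p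

def rayleighQuotients (T : ℕ) (p : ℝ) : Set ℝ :=
  {r | ∃ u : ℕ → ℝ, u 0 = 0 ∧ u (T + 1) = 0 ∧ (∃ k ∈ Icc 1 T, u k ≠ 0) ∧
    r = dirichletSum T p u / lpSum T p u}

noncomputable def energy (T : ℕ) (p α : ℝ) (G : ℕ → ℝ → ℝ) (u : ℕ → ℝ) : ℝ :=
  dirichletSum T p u / p - α * ∑ k ∈ Icc 1 T, G k (u k)

theorem dirichletSum_nonneg (u : ℕ → ℝ) : 0 ≤ dirichletSum T p u :=
  sum_nonneg fun _ _ => by positivity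

theorem lpSum_nonneg (u : ℕ → ℝ) : 0 ≤ lpSum T p u :=
  sum_nonneg fun _ _ => by positivity

theorem lpSum_pos {u : ℕ → ℝ} (hu : ∃ k ∈ Icc 1 T, u k ≠ 0) : 0 < lpSum T p u := by
  obtain ⟨k, hk, huk⟩ := hu
  exact sum_pos' (fun _ _ => by positivity) ⟨k, hk, by positivity⟩

theorem dirichletSum_pos {u : ℕ → ℝ} (hp : p ≠ 0) (hu : u ∈ zeroBoundary T)
    (hne : ∃ k ∈ Icc 1 T, u k ≠ 0) : 0 < dirichletSum T p u := by
  obtain ⟨k, hk, huk⟩ := hne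
  refine (dirichletSum_nonneg u).lt_of_ne fun hzero => huk ?_
  have hstep : ∀ i ∈ range k, u (i + 1) - u i = 0 := fun i hi => by
    have := (sum_eq_zero_iff_of_nonneg fun _ _ => by positivity).1 hzero.symm (i + 1)
      (by simp at hi hk ⊢; omega)
    simpa [rpow_eq_zero (abs_nonneg _) hp, sub_eq_zero] using this
  have := sum_eq_zero hstep
  rwa [sum_range_sub, hu.1, sub_zero] at this

theorem rayleighQuotients_pos {lam : ℝ} (hp : p ≠ 0) (hlam : lam ∈ rayleighQuotients T p) :
    0 < lam := by
  obtain ⟨u, h0, hT, hne, rfl⟩ := hlam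
  exact div_pos (dirichletSum_pos hp ⟨h0, hT⟩ hne) (lpSum_pos hne)

theorem mul_lpSum_le_dirichletSum {lam : ℝ} (hp : p ≠ 0)
    (hlam : lam ∈ lowerBounds (rayleighQuotients T p)) {u : ℕ → ℝ} (hu : u ∈ zeroBoundary T) :
    lam * lpSum T p u ≤ dirichletSum T p u := by
  by_cases hne : ∃ k ∈ Icc 1 T, u k ≠ 0
  · exact (le_div_iff₀ (lpSum_pos hne)).1 (hlam ⟨u, hu.1, hu.2, hne, rfl⟩)
  · push Not at hne
    have : lpSum T p u = 0 := sum_eq_zero fun k hk => by simp [hne k hk, zero_rpow hp]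
    simpa [this] using dirichletSum_nonneg u

theorem hasDerivAt_energy_add_smul (hp : 1 < p) {G g : ℕ → ℝ → ℝ}
    (hG : ∀ k ∈ Icc 1 T, ∀ x, HasDerivAt (G k) (g k x) x) (u h : ℕ → ℝ) :
    HasDerivAt (fun t : ℝ => energy T p α G (u + t • h))
      ((∑ k ∈ Icc 1 (T + 1), phiP p (u k - u (k - 1)) * (h k - h (k - 1)))
        - α * ∑ k ∈ Icc 1 T, g k (u k) * h k) 0 := by
  have hcoord : ∀ n, HasDerivAt (fun t : ℝ => (u + t • h) n) (h n) 0 := fun n => by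
    simpa using ((hasDerivAt_id (0 : ℝ)).mul_const (h n)).const_add (u n)
  have hdiff : ∀ k ∈ Icc 1 (T + 1),
      HasDerivAt (fun t : ℝ => |(u + t • h) k - (u + t • h) (k - 1)| ^ p)
        (p * phiP p (u k - u (k - 1)) * (h k - h (k - 1))) 0 := fun k _ => by
    refine ((hasDerivAt_abs_rpow _ hp).comp 0 ((hcoord k).sub (hcoord (k - 1)))).congr_deriv ?_
    simp [phiP, mul_assoc]
  have hpot : ∀ k ∈ Icc 1 T, HasDerivAt (fun t : ℝ => G k ((u + t • h) k))
      (g k (u k) * h k) 0 := fun k hk =>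
    ((hG k hk _).comp 0 (hcoord k)).congr_deriv (by simp)
  refine (((HasDerivAt.fun_sum hdiff).div_const p).sub
    ((HasDerivAt.fun_sum hpot).const_mul α)).congr_deriv ?_
  rw [sum_div]
  congr 1
  refine sum_congr rfl fun k _ => ?_
  field_simp [(zero_lt_one.trans hp).ne']

theorem sum_mul_sub_single {a : ℕ → ℝ} {j : ℕ} (hj : j ∈ Icc 1 T) :
    ∑ k ∈ Icc 1 (T + 1), a k * ((Pi.single j 1 : ℕ → ℝ) k - (Pi.single j 1 : ℕ → ℝ) (k - 1)) =
      a j - a (j + 1) := by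
  simp only [mul_sub, sum_sub_distrib]
  congr 1
  · rw [sum_eq_single j] <;> simp_all
    omega
  · rw [sum_eq_single (j + 1)] <;> simp_all [Pi.single_apply]
    omega

theorem phiP_sub_phiP_eq_of_isMinOn (hp : 1 < p) {G g : ℕ → ℝ → ℝ}
    (hG : ∀ k ∈ Icc 1 T, ∀ x, HasDerivAt (G k) (g k x) x) {u : ℕ → ℝ}
    (hmin : IsMinOn (energy T p α G) (zeroBoundary T) u) (hu : u ∈ zeroBoundary T)
    {j : ℕ} (hj : j ∈ Icc 1 T) :
    phiP p (u j - u (j - 1)) - phiP p (u (j + 1) - u j) = α * g j (u j) := by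
  have hperturb : ∀ t : ℝ, u + t • Pi.single j 1 ∈ zeroBoundary T := fun t => by
    simp only [mem_Icc] at hj
    simp [zeroBoundary, hu.1, hu.2, Pi.single_apply]
    omega
  have hloc : IsLocalMin (fun t : ℝ => energy T p α G (u + t • Pi.single j 1)) 0 :=
    Eventually.of_forall fun t => by simpa using hmin (hperturb t)
  have := hloc.hasDerivAt_eq_zero (hasDerivAt_energy_add_smul hp hG u _)
  rw [sum_mul_sub_single hj, sum_eq_single j (by simp_all [Pi.single_apply]) (by simp_all)] at this
  simpa [sub_eq_zero] using this

def extendByZero (v : Fin T → ℝ) (n : ℕ) : ℝ :=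
  if h : n ≠ 0 ∧ n - 1 < T then v ⟨n - 1, h.2⟩ else 0

theorem extendByZero_succ (v : Fin T → ℝ) (i : Fin T) : extendByZero v (i + 1) = v i := by
  simp [extendByZero]

theorem extendByZero_mem_zeroBoundary (v : Fin T → ℝ) : extendByZero v ∈ zeroBoundary T := by
  simp [extendByZero, zeroBoundary]

theorem extendByZero_restrict {u : ℕ → ℝ} (hu : u ∈ zeroBoundary T) {n : ℕ} (hn : n ≤ T + 1) :
    extendByZero (fun i : Fin T => u (i + 1)) n = u n := by
  unfold extendByZero
  split_ifs with h
  · simp only [Nat.sub_add_cancel (Nat.one_le_iff_ne_zero.2 h.1)]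
  · obtain rfl | rfl : n = 0 ∨ n = T + 1 := by omega
    exacts [hu.1.symm, hu.2.symm]

theorem continuous_extendByZero_apply (n : ℕ) :
    Continuous fun v : Fin T → ℝ => extendByZero v n := by
  unfold extendByZero
  split_ifs <;> fun_prop

theorem norm_rpow_le_lpSum (hp : 0 < p) (v : Fin T → ℝ) :
    ‖v‖ ^ p ≤ lpSum T p (extendByZero v) := by
  rw [← le_rpow_inv_iff_of_pos (norm_nonneg _) (lpSum_nonneg _) hp,
    pi_norm_le_iff_of_nonneg (rpow_nonneg (lpSum_nonneg _) _)]
  intro i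
  rw [le_rpow_inv_iff_of_pos (norm_nonneg _) (lpSum_nonneg _) hp, norm_eq_abs,
    ← extendByZero_succ v i]
  exact single_le_sum (f := fun k => |extendByZero v k| ^ p) (fun _ _ => by positivity)
    (by simp)

theorem energy_congr {G : ℕ → ℝ → ℝ} {u u' : ℕ → ℝ} (h : ∀ n ≤ T + 1, u n = u' n) :
    energy T p α G u = energy T p α G u' := by
  have hdir : dirichletSum T p u = dirichletSum T p u' := sum_congr rfl fun k hk => by
    simp only [mem_Icc] at hk
    rw [h k hk.2, h (k - 1) (by omega)]
  have hpot : ∑ k ∈ Icc 1 T, G k (u k) = ∑ k ∈ Icc 1 T, G k (u' k) :=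
    sum_congr rfl fun k hk => by rw [h k (by simp at hk; omega)]
  rw [energy, energy, hdir, hpot]

theorem continuous_energy_extendByZero (hp : 0 ≤ p) {G : ℕ → ℝ → ℝ}
    (hG : ∀ k ∈ Icc 1 T, Continuous (G k)) :
    Continuous fun v : Fin T → ℝ => energy T p α G (extendByZero v) := by
  unfold energy dirichletSum
  refine ((continuous_finsetSum _ fun k _ => ?_).div_const p).sub
    (continuous_const.mul (continuous_finsetSum _ fun k hk => ?_))
  · exact ((continuous_extendByZero_apply k).sub
      (continuous_extendByZero_apply (k - 1))).abs.rpow_const fun _ => Or.inr hp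
  · exact (hG k hk).comp (continuous_extendByZero_apply k)

theorem exists_isMinOn_energy (hp : 0 < p) {G : ℕ → ℝ → ℝ}
    (hG : ∀ k ∈ Icc 1 T, Continuous (G k)) {a K : ℝ} (ha : 0 < a)
    (hcoer : ∀ u ∈ zeroBoundary T, a * lpSum T p u - K ≤ energy T p α G u) :
    ∃ u ∈ zeroBoundary T, IsMinOn (energy T p α G) (zeroBoundary T) u := by
  have htend : Tendsto (fun v : Fin T → ℝ => energy T p α G (extendByZero v))
      (cocompact _) atTop := by
    refine tendsto_atTop_mono (fun v => ?_) (tendsto_atTop_add_const_right _ (-K)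
      (((tendsto_rpow_atTop hp).comp tendsto_norm_cocompact_atTop).const_mul_atTop ha))
    have := hcoer _ (extendByZero_mem_zeroBoundary v)
    have := mul_le_mul_of_nonneg_left (norm_rpow_le_lpSum hp v) ha.le
    simp only [Function.comp_apply]
    linarith
  obtain ⟨v, hv⟩ := (continuous_energy_extendByZero hp.le hG).exists_forall_le htend
  refine ⟨extendByZero v, extendByZero_mem_zeroBoundary v, isMinOn_iff.2 fun u hu => ?_⟩
  rw [energy_congr fun n hn => (extendByZero_restrict hu hn).symm]
  exact hv _

theorem energy_coercive (hp : 0 < p) (hα : 0 < α) {lam C : ℝ}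
    (hlam : lam ∈ lowerBounds (rayleighQuotients T p)) {G : ℕ → ℝ → ℝ}
    (hC : ∀ k ∈ Icc 1 T, ∀ s, G k s ≤ lam / (2 * p * α) * |s| ^ p + C)
    {u : ℕ → ℝ} (hu : u ∈ zeroBoundary T) :
    lam / (2 * p) * lpSum T p u - α * (T * C) ≤ energy T p α G u := by
  have hpot : ∑ k ∈ Icc 1 T, G k (u k) ≤ lam / (2 * p * α) * lpSum T p u + T * C :=
    calc ∑ k ∈ Icc 1 T, G k (u k)
        ≤ ∑ k ∈ Icc 1 T, (lam / (2 * p * α) * |u k| ^ p + C) :=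
          sum_le_sum fun k hk => hC k hk _
      _ = lam / (2 * p * α) * lpSum T p u + T * C := by
          simp [sum_add_distrib, ← mul_sum, lpSum]
  have hdir := div_le_div_of_nonneg_right (mul_lpSum_le_dirichletSum hp.ne' hlam hu) hp.le
  have hαpot := mul_le_mul_of_nonneg_left hpot hα.le
  have hsplit : lam * lpSum T p u / p = 2 * (lam / (2 * p) * lpSum T p u) := by
    field_simp
  have hαC : α * (lam / (2 * p * α) * lpSum T p u + T * C) =
      lam / (2 * p) * lpSum T p u + α * (T * C) := by
    field_simp
  rw [energy]
  linarith

theorem exists_energy_neg (hp : 0 < p) (hα : 0 ≤ α) {lam c : ℝ} {w : ℕ → ℝ}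
    (hw : w ∈ zeroBoundary T) (hD : 0 < lpSum T p w)
    (hw_eig : dirichletSum T p w = lam * lpSum T p w) (hc : lam < p * α * c)
    {G : ℕ → ℝ → ℝ} (hG0 : ∀ k, G k 0 = 0)
    (hG : ∀ᶠ ξ in 𝓝[>] 0, ∀ k ∈ Icc 1 T, c * ξ ^ p ≤ G k ξ) :
    ∃ u ∈ zeroBoundary T, energy T p α G u < 0 := by
  have hev : ∀ᶠ t in 𝓝[>] (0 : ℝ),
      0 < t ∧ ∀ k ∈ Icc 1 T, c * (|w k| * t) ^ p ≤ G k (|w k| * t) := by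
    refine eventually_mem_nhdsWithin.and ((eventually_all_finset _).2 fun k hk => ?_)
    rcases eq_or_ne (w k) 0 with hwk | hwk
    · simp [hwk, hG0, zero_rpow hp.ne']
    · exact (eventually_nhdsGT_zero_mul_left (abs_pos.2 hwk) hG).mono fun t ht => ht k hk
  obtain ⟨t, ht, htG⟩ := hev.exists
  refine ⟨fun n => |w n| * t, by simp [zeroBoundary, hw.1, hw.2], ?_⟩
  have hdir : dirichletSum T p (fun n => |w n| * t) ≤ t ^ p * dirichletSum T p w := by
    rw [dirichletSum, dirichletSum, mul_sum]
    refine sum_le_sum fun k _ => ?_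
    calc |(|w k| * t - |w (k - 1)| * t)| ^ p = t ^ p * |(|w k| - |w (k - 1)|)| ^ p := by
          rw [← sub_mul, abs_mul, abs_of_pos ht, mul_rpow (abs_nonneg _) ht.le, mul_comm]
      _ ≤ t ^ p * |w k - w (k - 1)| ^ p := by
          gcongr t ^ p * ?_
          exact rpow_le_rpow (abs_nonneg _) (abs_abs_sub_abs_le_abs_sub _ _) hp.le
  have hpot : c * (t ^ p * lpSum T p w) ≤ ∑ k ∈ Icc 1 T, G k (|w k| * t) := by
    rw [lpSum, mul_sum, mul_sum]
    refine sum_le_sum fun k hk => ?_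
    rw [mul_comm (t ^ p), ← mul_rpow (abs_nonneg _) ht.le]
    exact htG k hk
  have hX : 0 < t ^ p * lpSum T p w := by positivity
  have hdir' := div_le_div_of_nonneg_right hdir hp.le
  have hαpot := mul_le_mul_of_nonneg_left hpot hα
  have key : t ^ p * (lam * lpSum T p w) / p < α * (c * (t ^ p * lpSum T p w)) := by
    rw [div_lt_iff₀ hp]
    nlinarith [mul_lt_mul_of_pos_right hc hX]
  rw [energy]
  rw [hw_eig] at hdir'
  linarith

theorem exists_ne_zero_of_energy_neg (hp : p ≠ 0) {G : ℕ → ℝ → ℝ} (hG0 : ∀ k, G k 0 = 0)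
    {u : ℕ → ℝ} (hu : energy T p α G u < 0) : ∃ m ≤ T + 1, u m ≠ 0 := by
  by_contra! hzero
  rw [energy_congr (u' := 0) hzero] at hu
  simp [energy, dirichletSum, hG0, zero_rpow hp] at hu

theorem exists_pos_solution_of_growth (hp : 1 < p) (hα : 0 < α) {lam c C : ℝ}
    (hlam : IsLeast (rayleighQuotients T p) lam) {G g : ℕ → ℝ → ℝ}
    (hG' : ∀ k ∈ Icc 1 T, ∀ x, HasDerivAt (G k) (g k x) x) (hg : ∀ k ∈ Icc 1 T, ∀ x, 0 ≤ g k x)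
    (hG0 : ∀ k, G k 0 = 0)
    (hgrowth : ∀ k ∈ Icc 1 T, ∀ s, G k s ≤ lam / (2 * p * α) * |s| ^ p + C)
    (hc : lam < p * α * c) (hsmall : ∀ᶠ ξ in 𝓝[>] 0, ∀ k ∈ Icc 1 T, c * ξ ^ p ≤ G k ξ) :
    ∃ u ∈ zeroBoundary T, ∀ k ∈ Icc 1 T,
      0 < u k ∧ phiP p (u k - u (k - 1)) - phiP p (u (k + 1) - u k) = α * g k (u k) := by
  have hp0 : 0 < p := zero_lt_one.trans hp
  obtain ⟨u, hu, hmin⟩ := exists_isMinOn_energy hp0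
    (fun k hk => continuous_iff_continuousAt.2 fun x => (hG' k hk x).continuousAt)
    (div_pos (rayleighQuotients_pos hp0.ne' hlam.1) (by positivity))
    fun v hv => energy_coercive hp0 hα hlam.2 hgrowth hv
  obtain ⟨w, hw0, hwT, hw_ne, hw⟩ := hlam.1
  obtain ⟨v, hv, hv_neg⟩ := exists_energy_neg hp0 hα.le ⟨hw0, hwT⟩ (lpSum_pos hw_ne)
    (by rw [hw, div_mul_cancel₀ _ (lpSum_pos hw_ne).ne']) hc hG0 hsmall
  obtain ⟨m, hmT, hm⟩ := exists_ne_zero_of_energy_neg hp0.ne' hG0 ((hmin hv).trans_lt hv_neg)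
  have hEL := fun (k : ℕ) (hk : k ∈ Icc 1 T) => phiP_sub_phiP_eq_of_isMinOn hp hG' hmin hu hk
  have hconcave : AntitoneOn (fun i => u (i + 1) - u i) (Set.Iio (T + 1)) :=
    antitoneOn_Iio_of_succ_le fun i hi => by
      have hi' : i + 1 ∈ Icc 1 T := by simp; omega
      have := hEL _ hi'
      rw [Nat.add_sub_cancel] at this
      exact (strictMono_phiP hp).le_iff_le.1 (by nlinarith [hg _ hi' (u (i + 1))])
  refine ⟨u, hu, fun k hk => ⟨?_, hEL k hk⟩⟩
  simp only [mem_Icc] at hk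
  exact pos_of_antitoneOn_sub hconcave hu.1 hu.2 hmT hm hk.1 (by omega)

noncomputable def truncPrimitive (f : ℝ → ℝ) (ξ : ℝ) : ℝ := ∫ s in (0 : ℝ)..ξ, f (max s 0)

theorem hasDerivAt_truncPrimitive {f : ℝ → ℝ} (hf : ContinuousOn f (Set.Ici 0)) (x : ℝ) :
    HasDerivAt (truncPrimitive f) (f (max x 0)) x :=
  ((hf.comp_continuous (continuous_id.max continuous_const) fun s => le_max_right s 0)
    |>.integral_hasStrictDerivAt 0 x).hasDerivAt

theorem truncPrimitive_of_nonneg (f : ℝ → ℝ) {ξ : ℝ} (hξ : 0 ≤ ξ) :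
    truncPrimitive f ξ = ∫ s in (0 : ℝ)..ξ, f s :=
  intervalIntegral.integral_congr fun s hs => by
    rw [Set.uIcc_of_le hξ] at hs
    simp [max_eq_left hs.1]

theorem truncPrimitive_nonpos {f : ℝ → ℝ} (hf : ∀ ξ, 0 ≤ ξ → 0 ≤ f ξ) {ξ : ℝ} (hξ : ξ ≤ 0) :
    truncPrimitive f ξ ≤ 0 := by
  rw [truncPrimitive, intervalIntegral.integral_symm, neg_nonpos]
  exact intervalIntegral.integral_nonneg hξ fun s _ => hf _ (le_max_right s 0)

theorem exists_le_mul_rpow_add_of_tendsto {Φ : ℝ → ℝ} (hΦ : ContinuousOn Φ (Set.Ici 0))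
    (hlim : Tendsto (fun ξ => Φ ξ / ξ ^ p) atTop (𝓝 0)) {ε : ℝ} (hε : 0 < ε) :
    ∃ C, 0 ≤ C ∧ ∀ ξ, 0 ≤ ξ → Φ ξ ≤ ε * ξ ^ p + C := by
  obtain ⟨M, hM⟩ := eventually_atTop.1 ((hlim.eventually_lt_const hε).and (eventually_gt_atTop 0))
  obtain ⟨C, hC⟩ :=
    isCompact_Icc.bddAbove_image (hΦ.mono (Set.Icc_subset_Ici_self : Set.Icc 0 M ⊆ _))
  refine ⟨max C 0, le_max_right _ _, fun ξ hξ => ?_⟩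
  have : 0 ≤ ε * ξ ^ p := by positivity
  rcases le_total ξ M with hξM | hMξ
  · linarith [hC ⟨ξ, ⟨hξ, hξM⟩, rfl⟩, le_max_left C 0]
  · obtain ⟨hlt, hξ0⟩ := hM ξ hMξ
    rw [div_lt_iff₀ (rpow_pos_of_pos hξ0 p)] at hlt
    linarith [le_max_right C 0]

theorem exists_truncPrimitive_le_of_tendsto {f : ℕ → ℝ → ℝ} {s : Finset ℕ}
    (hf_cont : ∀ k ∈ s, ContinuousOn (f k) (Set.Ici 0))
    (hf_nonneg : ∀ k ∈ s, ∀ ξ, 0 ≤ ξ → 0 ≤ f k ξ)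
    (hlim : Tendsto (fun ξ => (∑ k ∈ s, ∫ x in (0 : ℝ)..ξ, f k x) / ξ ^ p) atTop (𝓝 0))
    {ε : ℝ} (hε : 0 < ε) :
    ∃ C, ∀ k ∈ s, ∀ ξ, truncPrimitive (f k) ξ ≤ ε * |ξ| ^ p + C := by
  have hcont : ContinuousOn (fun ξ => ∑ k ∈ s, ∫ x in (0 : ℝ)..ξ, f k x) (Set.Ici 0) :=
    (continuous_finsetSum s fun k hk => continuous_iff_continuousAt.2 fun x =>
      (hasDerivAt_truncPrimitive (hf_cont k hk) x).continuousAt).continuousOn.congr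
      fun ξ hξ => sum_congr rfl fun k _ => (truncPrimitive_of_nonneg (f k) hξ).symm
  obtain ⟨C, hC0, hC⟩ := exists_le_mul_rpow_add_of_tendsto hcont hlim hε
  refine ⟨C, fun k hk ξ => ?_⟩
  rcases le_total ξ 0 with hξ | hξ
  · have : 0 ≤ ε * |ξ| ^ p := by positivity
    linarith [truncPrimitive_nonpos (hf_nonneg k hk) hξ]
  · rw [truncPrimitive_of_nonneg _ hξ, abs_of_nonneg hξ]
    exact (single_le_sum (fun j hj => intervalIntegral.integral_nonneg hξ fun x hx =>
      hf_nonneg j hj x hx.1) hk).trans (hC ξ hξ)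

theorem eventually_mul_rpow_le_of_lt_liminf {F : ℝ → ℝ} (hF : ∀ ξ, 0 < ξ → 0 ≤ F ξ) {c : ℝ}
    (hc : c < liminf (fun ξ => F ξ / ξ ^ p) (𝓝[>] 0)) : ∀ᶠ ξ in 𝓝[>] 0, c * ξ ^ p ≤ F ξ := by
  have hbdd : IsBoundedUnder (· ≥ ·) (𝓝[>] 0) fun ξ => F ξ / ξ ^ p :=
    isBoundedUnder_of_eventually_ge (a := 0) <| eventually_mem_nhdsWithin.mono fun ξ hξ =>
      div_nonneg (hF ξ hξ) (rpow_nonneg (le_of_lt hξ) p)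
  filter_upwards [eventually_lt_of_lt_liminf hc hbdd, eventually_mem_nhdsWithin] with ξ hlt hξ
  exact ((lt_div_iff₀ (rpow_pos_of_pos hξ p)).1 hlt).le

theorem eventually_mul_rpow_le_truncPrimitive {f : ℕ → ℝ → ℝ} {s : Finset ℕ}
    (hf_nonneg : ∀ k ∈ s, ∀ ξ, 0 ≤ ξ → 0 ≤ f k ξ) {c : ℝ}
    (hc : ∀ k ∈ s, c < liminf (fun ξ => (∫ x in (0 : ℝ)..ξ, f k x) / ξ ^ p) (𝓝[>] 0)) :
    ∀ᶠ ξ in 𝓝[>] 0, ∀ k ∈ s, c * ξ ^ p ≤ truncPrimitive (f k) ξ :=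
  (eventually_all_finset _).2 fun k hk =>
    (eventually_mul_rpow_le_of_lt_liminf (fun ξ hξ => intervalIntegral.integral_nonneg hξ.le
      fun x hx => hf_nonneg k hk x hx.1) (hc k hk)).mp <|
    eventually_mem_nhdsWithin.mono fun ξ hξ h => by
      rwa [truncPrimitive_of_nonneg _ (le_of_lt hξ)]

end DiscretePLaplacian

open DiscretePLaplacian in
/-- Theorem `Esistenza2`. Let `T ≥ 2`, `p > 1`,
`f : ℤ[1,T] × [0,∞) → [0,∞)` continuous, `F k ξ = ∫_0^ξ f(k,s) ds`, and let `λ₁` be the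
first eigenvalue of the discrete `p`-Laplacian, i.e. the minimum of the Rayleigh quotient
over nonzero `u ∈ H`.  Assume `(∑_{k=1}^T F k ξ)/ξ^p → 0` as `ξ → +∞` and that
`γ k := liminf_{ξ → 0⁺} F k ξ / ξ^p > 0` for every `k ∈ ℤ[1,T]`.  Then for every
`α > λ₁ / (p · min_k γ k)` the problem `(D^f_α)` has at least one positive solution. -/
theorem discrete_pLaplacian_parametric_existence
    (T : ℕ) (hT : 2 ≤ T) (p : ℝ) (hp : 1 < p)
    (f : ℕ → ℝ → ℝ)
    (hf_cont : ∀ k ∈ Finset.Icc 1 T, ContinuousOn (f k) (Set.Ici 0))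
    (hf_nonneg : ∀ k ∈ Finset.Icc 1 T, ∀ ξ : ℝ, 0 ≤ ξ → 0 ≤ f k ξ)
    (φ : ℝ → ℝ) (hφ : ∀ s : ℝ, φ s = |s| ^ (p - 2) * s)
    (F : ℕ → ℝ → ℝ) (hF : ∀ k : ℕ, ∀ ξ : ℝ, F k ξ = ∫ s in (0:ℝ)..ξ, f k s)
    (lam : ℝ)
    (hlam : IsLeast
      {r : ℝ | ∃ u : ℕ → ℝ, u 0 = 0 ∧ u (T + 1) = 0 ∧ (∃ k ∈ Finset.Icc 1 T, u k ≠ 0) ∧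
        r = (∑ k ∈ Finset.Icc 1 (T + 1), |u k - u (k - 1)| ^ p) /
            (∑ k ∈ Finset.Icc 1 T, |u k| ^ p)} lam)
    (γ : ℕ → ℝ)
    (hγ : ∀ k ∈ Finset.Icc 1 T,
      γ k = Filter.liminf (fun ξ : ℝ => F k ξ / ξ ^ p) (nhdsWithin 0 (Set.Ioi 0)))
    (hγpos : ∀ k ∈ Finset.Icc 1 T, 0 < γ k)
    (hlim : Filter.Tendsto (fun ξ : ℝ => (∑ k ∈ Finset.Icc 1 T, F k ξ) / ξ ^ p)
      Filter.atTop (nhds 0))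
    (α : ℝ)
    (hα : lam / (p * ((Finset.Icc 1 T).inf' (Finset.nonempty_Icc.mpr (by omega)) γ)) < α) :
    ∃ u : ℕ → ℝ, u 0 = 0 ∧ u (T + 1) = 0 ∧
      (∀ k ∈ Finset.Icc 1 T, 0 < u k) ∧
      (∀ k ∈ Finset.Icc 1 T,
        -(φ (u (k + 1) - u k) - φ (u k - u (k - 1))) = α * f k (u k)) := by
  obtain rfl : φ = phiP p := funext hφ
  obtain rfl : F = fun k ξ => ∫ s in (0 : ℝ)..ξ, f k s := funext fun k => funext (hF k)
  have hp0 : 0 < p := zero_lt_one.trans hp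
  have hne : (Finset.Icc 1 T).Nonempty := Finset.nonempty_Icc.mpr (by omega)
  set m := (Finset.Icc 1 T).inf' hne γ
  have hm : 0 < m := by
    obtain ⟨k, hk, hkm⟩ := Finset.exists_mem_eq_inf' hne γ
    rw [show m = γ k from hkm]
    exact hγpos k hk
  have hlam0 : 0 < lam := rayleighQuotients_pos hp0.ne' hlam.1
  have hα0 : 0 < α := (div_pos hlam0 (by positivity)).trans hα
  obtain ⟨c, hc_lam, hcm⟩ : ∃ c, lam / (p * α) < c ∧ c < m := by
    refine exists_between ((div_lt_iff₀ (by positivity)).2 ?_)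
    linarith [(div_lt_iff₀ (by positivity)).1 hα]
  obtain ⟨C, hC⟩ := exists_truncPrimitive_le_of_tendsto hf_cont hf_nonneg hlim
    (show 0 < lam / (2 * p * α) by positivity)
  have hsmall := eventually_mul_rpow_le_truncPrimitive hf_nonneg
    fun k hk => hγ k hk ▸ hcm.trans_le (Finset.inf'_le γ hk)
  obtain ⟨u, hu, hsol⟩ := exists_pos_solution_of_growth hp hα0 hlam
    (fun k hk => hasDerivAt_truncPrimitive (hf_cont k hk))
    (fun k hk x => hf_nonneg k hk _ (le_max_right x 0)) (fun _ => intervalIntegral.integral_same)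
    hC (by rwa [div_lt_iff₀ (by positivity), mul_comm] at hc_lam) hsmall
  refine ⟨u, hu.1, hu.2, fun k hk => (hsol k hk).1, fun k hk => ?_⟩
  have hEL := (hsol k hk).2
  rw [max_eq_left (hsol k hk).1.le] at hEL
  linarith
end

section
/- Let u : {0, 1, ..., T+1} → ℝ satisfy -(φ_p(u(k+1) - u(k)) - φ_p(u(k) - u(k-1))) ≥ 0 for all k ∈ {1, ..., T}, together with u(0) ≥ 0 and u(T+1) ≥ 0. Then either u(k) > 0 for every k ∈ {1, ..., T}, or u(k) = 0 for every k ∈ {1, ..., T}. -/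
open Real

lemma phi_aux_pos (p : ℝ) (hp : 1 < p) :
    ∀ a b : ℝ, 0 ≤ a → a < b → |a| ^ (p - 2) * a < |b| ^ (p - 2) * b := by
  intro a b ha hab
  have hb : 0 < b := lt_of_le_of_lt ha hab
  have hb' : |b| ^ (p - 2) * b = b ^ (p - 1) := by
    rw [abs_of_pos hb, show p - 1 = (p - 2) + 1 by ring, Real.rpow_add_one (ne_of_gt hb)]
  rcases eq_or_lt_of_le ha with h0 | ha'
  · rw [← h0]
    simp only [mul_zero, hb']
    exact Real.rpow_pos_of_pos hb _
  · have ha'' : |a| ^ (p - 2) * a = a ^ (p - 1) := by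
      rw [abs_of_pos ha', show p - 1 = (p - 2) + 1 by ring, Real.rpow_add_one (ne_of_gt ha')]
    rw [ha'', hb']
    exact Real.rpow_lt_rpow ha hab (by linarith)

lemma phi_strictMono (p : ℝ) (hp : 1 < p) :
    StrictMono (fun s : ℝ => |s| ^ (p - 2) * s) := by
  intro a b hab
  show |a| ^ (p - 2) * a < |b| ^ (p - 2) * b
  rcases le_or_gt 0 a with ha | ha
  · exact phi_aux_pos p hp a b ha hab
  · rcases le_or_gt b 0 with hb | hb
    · have h := phi_aux_pos p hp (-b) (-a) (by linarith) (by linarith)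
      rw [abs_neg, abs_neg, mul_neg, mul_neg] at h
      linarith
    · have h1 : |a| ^ (p - 2) * a < 0 := by
        have h := phi_aux_pos p hp 0 (-a) le_rfl (by linarith)
        rw [abs_neg, mul_neg, mul_zero] at h
        linarith
      have h2 : 0 < |b| ^ (p - 2) * b := by
        have h := phi_aux_pos p hp 0 b le_rfl hb
        rw [mul_zero] at h
        linarith
      linarith

/-- strong comparison principle, Lemma 2.3 of [APR2].
If `-(φ_p(Δu(k)) - φ_p(Δu(k-1))) ≥ 0` for all `k ∈ ℤ[1,T]` and `u 0 ≥ 0`,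
`u (T+1) ≥ 0`, then either `u > 0` on `ℤ[1,T]` or `u ≡ 0` on `ℤ[1,T]`. -/
theorem discrete_strong_comparison_principle
    (T : ℕ) (hT : 2 ≤ T) (p : ℝ) (hp : 1 < p)
    (φ : ℝ → ℝ) (hφ : ∀ s : ℝ, φ s = |s| ^ (p - 2) * s)
    (u : ℕ → ℝ)
    (hineq : ∀ k ∈ Finset.Icc 1 T,
      0 ≤ -(φ (u (k + 1) - u k) - φ (u k - u (k - 1))))
    (h0 : 0 ≤ u 0) (hT1 : 0 ≤ u (T + 1)) :
    (∀ k ∈ Finset.Icc 1 T, 0 < u k) ∨ (∀ k ∈ Finset.Icc 1 T, u k = 0) := by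
  have hsm := phi_strictMono p hp
  have hmono : ∀ a b : ℝ, φ a ≤ φ b → a ≤ b := by
    intro a b h
    by_contra hba
    push_neg at hba
    have h2 : |b| ^ (p - 2) * b < |a| ^ (p - 2) * a := hsm hba
    rw [← hφ b, ← hφ a] at h2
    linarith
  -- the differences are nonincreasing
  have hd : ∀ i j : ℕ, i ≤ j → j ≤ T → u (j + 1) - u j ≤ u (i + 1) - u i := by
    intro i j hij
    induction j, hij using Nat.le_induction with
    | base => intro _; exact le_rfl
    | succ n hn ih =>
      intro hnT
      have hk := hineq (n + 1) (Finset.mem_Icc.mpr ⟨by omega, hnT⟩)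
      simp only [Nat.add_sub_cancel] at hk
      have hk' : φ (u (n + 1 + 1) - u (n + 1)) ≤ φ (u (n + 1) - u n) := by linarith
      have h1 := hmono _ _ hk'
      have h2 := ih (by omega)
      linarith
  -- telescoping lemmas
  have chain_le : ∀ a b : ℕ, a ≤ b → (∀ k, a ≤ k → k < b → u (k + 1) ≤ u k) → u b ≤ u a := by
    intro a b hab
    induction b, hab using Nat.le_induction with
    | base => intro _; exact le_rfl
    | succ n hn ih =>
      intro h
      have h1 := h n hn (Nat.lt_succ_self n)
      have h2 := ih (fun k hk hk' => h k hk (by omega))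
      linarith
  have chain_ge : ∀ a b : ℕ, a ≤ b → (∀ k, a ≤ k → k < b → u k ≤ u (k + 1)) → u a ≤ u b := by
    intro a b hab
    induction b, hab using Nat.le_induction with
    | base => intro _; exact le_rfl
    | succ n hn ih =>
      intro h
      have h1 := h n hn (Nat.lt_succ_self n)
      have h2 := ih (fun k hk hk' => h k hk (by omega))
      linarith
  -- nonnegativity everywhere
  have hnonneg : ∀ k, k ≤ T + 1 → 0 ≤ u k := by
    by_contra hneg
    push_neg at hneg
    obtain ⟨m, hmT, hm⟩ := hneg
    obtain ⟨m0, hm0mem, hm0min⟩ :=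
      Finset.exists_min_image (Finset.Icc 0 (T + 1)) u ⟨0, by simp⟩
    have hm0T : m0 ≤ T + 1 := (Finset.mem_Icc.mp hm0mem).2
    have hm0 : u m0 < 0 :=
      lt_of_le_of_lt (hm0min m (Finset.mem_Icc.mpr ⟨Nat.zero_le _, hmT⟩)) hm
    have h1 : 1 ≤ m0 := by
      by_contra h
      have : m0 = 0 := by omega
      rw [this] at hm0; linarith
    have h2 : m0 ≤ T := by
      by_contra h
      have : m0 = T + 1 := by omega
      rw [this] at hm0; linarith
    have hdm : u m0 - u (m0 - 1) ≤ 0 := by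
      have := hm0min (m0 - 1) (Finset.mem_Icc.mpr ⟨Nat.zero_le _, by omega⟩)
      linarith
    have hfin : u (T + 1) ≤ u m0 := by
      apply chain_le m0 (T + 1) (by omega)
      intro k hk hk'
      have hdk : u (k + 1) - u k ≤ u (m0 - 1 + 1) - u (m0 - 1) :=
        hd (m0 - 1) k (by omega) (by omega)
      rw [Nat.sub_add_cancel h1] at hdk
      linarith
    linarith
  by_cases hz : ∃ m ∈ Finset.Icc 1 T, u m = 0
  · right
    obtain ⟨m, hmmem, hm0⟩ := hz
    obtain ⟨hm1, hmT⟩ := Finset.mem_Icc.mp hmmem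
    have hupper : ∀ j, m ≤ j → j ≤ T + 1 → u j = 0 := by
      intro j hj hjT
      have hle : u j ≤ u m := by
        apply chain_le m j hj
        intro k hk hk'
        have hdk : u (k + 1) - u k ≤ u (m - 1 + 1) - u (m - 1) :=
          hd (m - 1) k (by omega) (by omega)
        rw [Nat.sub_add_cancel hm1] at hdk
        have hnn := hnonneg (m - 1) (by omega)
        rw [hm0] at hdk
        linarith
      have hj0 := hnonneg j hjT
      rw [hm0] at hle
      linarith
    have hdm0 : u (m + 1) - u m = 0 := by
      rw [hm0, hupper (m + 1) (by omega) (by omega)]; ring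
    have hlower : ∀ j, j ≤ m → u j = 0 := by
      intro j hj
      have hle : u j ≤ u m := by
        apply chain_ge j m hj
        intro k hk hk'
        have hdk : u (m + 1) - u m ≤ u (k + 1) - u k :=
          hd k m (le_of_lt hk') hmT
        rw [hdm0] at hdk
        linarith
      have hj0 := hnonneg j (by omega)
      rw [hm0] at hle
      linarith
    intro k hk
    obtain ⟨hk1, hkT⟩ := Finset.mem_Icc.mp hk
    rcases le_or_gt k m with h | h
    · exact hlower k h
    · exact hupper k (le_of_lt h) (by omega)
  · left
    push_neg at hz
    intro k hk
    have h1 := hnonneg k (by have := (Finset.mem_Icc.mp hk).2; omega)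
    have h2 := hz k hk
    exact lt_of_le_of_ne h1 (Ne.symm h2)
end

section
/- For every integer T ≥ 2 and every real p > 1, the inequality 2 / (T+1)^{(p-1)/p} < [(2/T)^{p-1} + (2/(T+2))^{p-1}]^{1/p} holds; equivalently, [(2/T)^{p-1} + (2/(T+2))^{p-1}]^{-1/p} < (T+1)^{(p-1)/p} / 2. -/
open Real

/-- Remark after the embedding constant.  For every integer `T ≥ 2` and
every real `p > 1` one has `2/(T+1)^{(p-1)/p} < [(2/T)^{p-1} + (2/(T+2))^{p-1}]^{1/p}`;
equivalently `[(2/T)^{p-1} + (2/(T+2))^{p-1}]^{-1/p} < (T+1)^{(p-1)/p}/2`. -/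
theorem kappa_odd_lt_kappa_even
    (T : ℕ) (hT : 2 ≤ T) (p : ℝ) (hp : 1 < p) :
    2 / ((T : ℝ) + 1) ^ ((p - 1) / p) <
      ((2 / (T : ℝ)) ^ (p - 1) + (2 / ((T : ℝ) + 2)) ^ (p - 1)) ^ (1 / p) ∧
    ((2 / (T : ℝ)) ^ (p - 1) + (2 / ((T : ℝ) + 2)) ^ (p - 1)) ^ (-(1 / p)) <
      ((T : ℝ) + 1) ^ ((p - 1) / p) / 2 := by
  set t : ℝ := (T : ℝ) with ht_def
  have ht : (2 : ℝ) ≤ t := by rw [ht_def]; exact_mod_cast hT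
  have ht0 : (0 : ℝ) < t := by linarith
  have ht1 : (0 : ℝ) < t + 1 := by linarith
  have ht2 : (0 : ℝ) < t + 2 := by linarith
  have hp0 : (0 : ℝ) < p := by linarith
  set q : ℝ := p - 1 with hq_def
  have hq : (0 : ℝ) < q := by simp [hq_def]; linarith
  have ha : (0 : ℝ) < t ^ q := rpow_pos_of_pos ht0 q
  have hb : (0 : ℝ) < (t + 2) ^ q := rpow_pos_of_pos ht2 q
  have hc : (0 : ℝ) < (t + 1) ^ q := rpow_pos_of_pos ht1 q
  -- key: 2/(t+1)^q < 1/t^q + 1/(t+2)^q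
  have hab : t ^ q * (t + 2) ^ q < ((t + 1) ^ q) ^ 2 := by
    have h1 : t ^ q * (t + 2) ^ q = (t * (t + 2)) ^ q :=
      (mul_rpow ht0.le ht2.le).symm
    have h2 : ((t + 1) ^ q) ^ 2 = ((t + 1) * (t + 1)) ^ q := by
      rw [mul_rpow ht1.le ht1.le, sq]
    rw [h1, h2]
    exact rpow_lt_rpow (by positivity) (by nlinarith) hq
  have hsqrt : Real.sqrt (t ^ q * (t + 2) ^ q) < (t + 1) ^ q :=
    (Real.sqrt_lt' hc).2 hab
  have hsqrt0 : (0 : ℝ) < Real.sqrt (t ^ q * (t + 2) ^ q) :=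
    Real.sqrt_pos.2 (by positivity)
  have hamgm : 2 / Real.sqrt (t ^ q * (t + 2) ^ q) ≤ 1 / t ^ q + 1 / (t + 2) ^ q := by
    have hs : Real.sqrt (t ^ q * (t + 2) ^ q)
        = Real.sqrt (t ^ q) * Real.sqrt ((t + 2) ^ q) := Real.sqrt_mul ha.le _
    have h2ab : 2 * Real.sqrt (t ^ q) * Real.sqrt ((t + 2) ^ q) ≤ t ^ q + (t + 2) ^ q := by
      have := two_mul_le_add_sq (Real.sqrt (t ^ q)) (Real.sqrt ((t + 2) ^ q))
      rwa [Real.sq_sqrt ha.le, Real.sq_sqrt hb.le] at this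
    rw [hs, div_add_div _ _ (ne_of_gt ha) (ne_of_gt hb), div_le_div_iff₀ (by positivity) (by positivity)]
    have hmul : Real.sqrt (t ^ q) * Real.sqrt ((t + 2) ^ q)
        * (Real.sqrt (t ^ q) * Real.sqrt ((t + 2) ^ q)) = t ^ q * (t + 2) ^ q := by
      rw [← Real.sqrt_mul ha.le, Real.mul_self_sqrt (by positivity)]
    nlinarith [Real.sqrt_pos.2 ha, Real.sqrt_pos.2 hb]
  have key : 2 / (t + 1) ^ q < 1 / t ^ q + 1 / (t + 2) ^ q :=
    lt_of_lt_of_le (by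
      apply div_lt_div_of_pos_left (by norm_num) hsqrt0 hsqrt) hamgm
  -- now the main first inequality
  have hS : (2 / t) ^ q + (2 / (t + 2)) ^ q
      = (2 : ℝ) ^ q * (1 / t ^ q) + (2 : ℝ) ^ q * (1 / (t + 2) ^ q) := by
    rw [div_rpow (by norm_num) ht0.le, div_rpow (by norm_num) ht2.le]
    ring
  have hS0 : (0 : ℝ) < (2 / t) ^ q + (2 / (t + 2)) ^ q := by positivity
  have h2q : (0 : ℝ) < (2 : ℝ) ^ q := rpow_pos_of_pos (by norm_num) q
  have main : 2 / (t + 1) ^ (q / p) < ((2 / t) ^ q + (2 / (t + 2)) ^ q) ^ (1 / p) := by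
    rw [one_div, lt_rpow_inv_iff_of_pos (by positivity) hS0.le hp0]
    have hpow : (2 / (t + 1) ^ (q / p)) ^ p = (2 : ℝ) ^ p / (t + 1) ^ q := by
      rw [div_rpow (by norm_num) (rpow_nonneg ht1.le _),
        ← Real.rpow_mul ht1.le, div_mul_cancel₀ q (ne_of_gt hp0)]
    rw [hpow, hS]
    have h2p : (2 : ℝ) ^ p = (2 : ℝ) ^ q * 2 := by
      rw [show p = q + 1 by simp [hq_def], rpow_add (by norm_num : (0:ℝ) < 2), rpow_one]
    rw [h2p]
    have : (2 : ℝ) ^ q * 2 / (t + 1) ^ q = (2 : ℝ) ^ q * (2 / (t + 1) ^ q) := by ring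
    rw [this]
    calc (2 : ℝ) ^ q * (2 / (t + 1) ^ q)
        < (2 : ℝ) ^ q * (1 / t ^ q + 1 / (t + 2) ^ q) := by
          exact (mul_lt_mul_iff_right₀ h2q).2 key
      _ = (2 : ℝ) ^ q * (1 / t ^ q) + (2 : ℝ) ^ q * (1 / (t + 2) ^ q) := by ring
  refine ⟨main, ?_⟩
  have hL0 : (0 : ℝ) < 2 / (t + 1) ^ (q / p) := by positivity
  have hinv : (((2 / t) ^ q + (2 / (t + 2)) ^ q) ^ ((1:ℝ) / p))⁻¹
      < (2 / (t + 1) ^ (q / p))⁻¹ := inv_strictAnti₀ hL0 main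
  rw [Real.rpow_neg hS0.le]
  calc (((2 / t) ^ q + (2 / (t + 2)) ^ q) ^ ((1:ℝ) / p))⁻¹
      < (2 / (t + 1) ^ (q / p))⁻¹ := hinv
    _ = (t + 1) ^ (q / p) / 2 := by rw [inv_div]
end

section
/- For every u ∈ H one has max_{k ∈ {1,...,T}} |u(k)| ≤ (1/κ) · (Σ_{k=1}^{T+1} |u(k) - u(k-1)|^p)^{1/p}. -/
/-!
Writing `u k` as the telescoping sum of the increments on `(0, k]` and on `(k, T + 1]` and
applying Hölder's inequality to each gives `(k ^ (1 - p) + (T + 1 - k) ^ (1 - p)) |u k| ^ p ≤ S`,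
where `S` is the full sum of `|Δu| ^ p`. Since `x ↦ x ^ (1 - p)` is convex, the weight is smallest
when `k` and `T + 1 - k` are as close as possible, i.e. equal to `⌊(T + 1) / 2⌋` and
`⌈(T + 1) / 2⌉`, and that minimum is `κ ^ p`.
-/

open Real Finset

lemma convexOn_rpow_of_nonpos {q : ℝ} (hq : q ≤ 0) :
    ConvexOn ℝ (Set.Ioi 0) fun x : ℝ ↦ x ^ q := by
  refine convexOn_of_hasDerivWithinAt2_nonneg (convex_Ioi 0)
    (f' := fun x ↦ q * x ^ (q - 1)) (f'' := fun x ↦ q * ((q - 1) * x ^ (q - 1 - 1)))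
    (fun x hx ↦ (continuousAt_rpow_const _ _ (Or.inl (ne_of_gt hx))).continuousWithinAt)
    ?_ ?_ ?_ <;> rw [interior_Ioi] <;> intro x hx
  · exact (hasDerivAt_rpow_const (Or.inl (ne_of_gt hx))).hasDerivWithinAt
  · exact ((hasDerivAt_rpow_const (Or.inl (ne_of_gt hx))).const_mul q).hasDerivWithinAt
  · rw [← mul_assoc]
    exact mul_nonneg (by nlinarith) (rpow_nonneg (le_of_lt hx) _)

lemma ConvexOn.add_le_add_of_mem_Icc {D : Set ℝ} {f : ℝ → ℝ} (hf : ConvexOn ℝ D f)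
    {x y s t : ℝ} (hx : x ∈ D) (hy : y ∈ D) (hs : s ∈ Set.Icc x y) (hst : s + t = x + y) :
    f s + f t ≤ f x + f y := by
  obtain ⟨a, b, ha, hb, hab, rfl⟩ : s ∈ segment ℝ x y := by
    rwa [segment_eq_Icc (hs.1.trans hs.2)]
  have ht : t = b • x + a • y := by
    simp only [smul_eq_mul]
    linear_combination hst - (x + y) * hab
  have hfs := hf.2 hx hy ha hb hab
  have hft := hf.2 hx hy hb ha (by rw [add_comm, hab])
  simp only [smul_eq_mul] at hfs hft
  rw [ht]
  linear_combination hfs + hft + (f x + f y) * hab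

lemma rpow_add_rpow_le_of_mem_Icc {q : ℝ} (hq : q ≤ 0) {x y s t : ℝ} (hx : 0 < x)
    (hs : s ∈ Set.Icc x y) (hst : s + t = x + y) : s ^ q + t ^ q ≤ x ^ q + y ^ q :=
  (convexOn_rpow_of_nonpos hq).add_le_add_of_mem_Icc hx (hx.trans_le (hs.1.trans hs.2)) hs hst

lemma cast_div_two_rpow_add_le {q : ℝ} (hq : q ≤ 0) {a b : ℕ} (ha : 0 < a) (hb : 0 < b) :
    (((a + b) / 2 : ℕ) : ℝ) ^ q + ((a + b - (a + b) / 2 : ℕ) : ℝ) ^ q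
      ≤ (a : ℝ) ^ q + (b : ℝ) ^ q := by
  wlog hab : a ≤ b generalizing a b
  · rw [add_comm a, add_comm ((a : ℝ) ^ q)]
    exact this hb ha (by omega)
  apply rpow_add_rpow_le_of_mem_Icc hq (by exact_mod_cast ha)
  · constructor <;> norm_cast <;> omega
  · push_cast [Nat.cast_sub (Nat.div_le_self (a + b) 2)]
    ring

noncomputable def sobolevConst (T : ℕ) (p : ℝ) : ℝ :=
  if Even T then ((2 / (T : ℝ)) ^ (p - 1) + (2 / ((T : ℝ) + 2)) ^ (p - 1)) ^ (1 / p)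
  else 2 / ((T : ℝ) + 1) ^ ((p - 1) / p)

lemma two_div_two_mul_rpow {x : ℝ} (hx : 0 ≤ x) (p : ℝ) :
    (2 / (2 * x)) ^ (p - 1) = x ^ (1 - p) := by
  rw [div_mul_cancel_left₀ two_ne_zero, inv_rpow hx, ← rpow_neg hx, neg_sub]

lemma sobolevConst_rpow (T : ℕ) {p : ℝ} (hp : 0 < p) :
    sobolevConst T p ^ p =
      (((T + 1) / 2 : ℕ) : ℝ) ^ (1 - p) + ((T + 1 - (T + 1) / 2 : ℕ) : ℝ) ^ (1 - p) := by
  unfold sobolevConst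
  split_ifs with hT
  · obtain ⟨n, rfl⟩ := hT
    have hdiv : (n + n + 1) / 2 = n := by omega
    have hsub : n + n + 1 - n = n + 1 := by omega
    rw [hdiv, hsub, one_div, rpow_inv_rpow (by positivity) hp.ne']
    push_cast
    rw [← two_mul, two_div_two_mul_rpow n.cast_nonneg,
      show (2 * n : ℝ) + 2 = 2 * (n + 1) by ring, two_div_two_mul_rpow (by positivity)]
  · obtain ⟨n, rfl⟩ := Nat.not_even_iff_odd.mp hT
    have hdiv : (2 * n + 1 + 1) / 2 = n + 1 := by omega
    have hsub : 2 * n + 1 + 1 - (n + 1) = n + 1 := by omega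
    rw [hdiv, hsub, div_rpow zero_le_two (by positivity), ← rpow_mul (by positivity),
      div_mul_cancel₀ _ hp.ne']
    push_cast
    rw [show (2 * n + 1 + 1 : ℝ) = 2 * (n + 1) by ring, mul_rpow zero_le_two (by positivity),
      ← two_mul, rpow_sub zero_lt_two, rpow_one, ← neg_sub, rpow_neg (by positivity)]
    field_simp

lemma sobolevConst_pos (T : ℕ) (p : ℝ) : 0 < sobolevConst T p := by
  unfold sobolevConst
  split_ifs <;> positivity

lemma sum_Ioc_sub_pred {M : Type*} [AddCommGroup M] (u : ℕ → M) {a b : ℕ} (hab : a ≤ b) :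
    ∑ j ∈ Ioc a b, (u j - u (j - 1)) = u b - u a := by
  induction b, hab using Nat.le_induction with
  | base => simp
  | succ b hab ih =>
    rw [sum_Ioc_succ_top hab, ih, Nat.add_sub_cancel]
    abel

lemma card_rpow_mul_abs_sum_rpow_le {ι : Type*} {s : Finset ι} (hs : s.Nonempty) (f : ι → ℝ)
    {p : ℝ} (hp : 1 ≤ p) : (#s : ℝ) ^ (1 - p) * |∑ i ∈ s, f i| ^ p ≤ ∑ i ∈ s, |f i| ^ p := by
  have hcard : (0 : ℝ) < #s := by exact_mod_cast hs.card_pos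
  calc (#s : ℝ) ^ (1 - p) * |∑ i ∈ s, f i| ^ p
      ≤ (#s : ℝ) ^ (1 - p) * ((#s : ℝ) ^ (p - 1) * ∑ i ∈ s, |f i| ^ p) := by
        gcongr
        exact (rpow_le_rpow (abs_nonneg _) (abs_sum_le_sum_abs _ _) (by linarith)).trans
          (rpow_sum_le_const_mul_sum_rpow s f hp)
    _ = ∑ i ∈ s, |f i| ^ p := by
        rw [← mul_assoc, ← rpow_add hcard, sub_add_sub_cancel', sub_self, rpow_zero, one_mul]

lemma rpow_mul_abs_sub_rpow_le_sum {p : ℝ} (hp : 1 ≤ p) (u : ℕ → ℝ) {a b : ℕ} (hab : a < b) :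
    ((b - a : ℕ) : ℝ) ^ (1 - p) * |u b - u a| ^ p ≤ ∑ j ∈ Ioc a b, |u j - u (j - 1)| ^ p := by
  have := card_rpow_mul_abs_sum_rpow_le (nonempty_Ioc.2 hab) (fun j ↦ u j - u (j - 1)) hp
  rwa [sum_Ioc_sub_pred u hab.le, Nat.card_Ioc] at this

lemma rpow_add_rpow_mul_abs_rpow_le_sum {p : ℝ} (hp : 1 ≤ p) {u : ℕ → ℝ} {N : ℕ} (h0 : u 0 = 0)
    (hN : u N = 0) {k : ℕ} (hk0 : 0 < k) (hkN : k < N) :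
    ((k : ℝ) ^ (1 - p) + ((N - k : ℕ) : ℝ) ^ (1 - p)) * |u k| ^ p
      ≤ ∑ j ∈ Ioc 0 N, |u j - u (j - 1)| ^ p := by
  have hleft := rpow_mul_abs_sub_rpow_le_sum hp u hk0
  have hright := rpow_mul_abs_sub_rpow_le_sum hp u hkN
  rw [h0, sub_zero, Nat.sub_zero] at hleft
  rw [hN, zero_sub, abs_neg] at hright
  rw [← sum_Ioc_consecutive _ hk0.le hkN.le]
  linarith

theorem discrete_sup_norm_le_general
    (T : ℕ) (p : ℝ) (hp : 1 < p)
    (κ : ℝ)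
    (hκ : κ = if Even T
      then ((2 / (T : ℝ)) ^ (p - 1) + (2 / ((T : ℝ) + 2)) ^ (p - 1)) ^ (1 / p)
      else 2 / ((T : ℝ) + 1) ^ ((p - 1) / p))
    (u : ℕ → ℝ) (h0 : u 0 = 0) (hT1 : u (T + 1) = 0) :
    ∀ k ∈ Finset.Icc 1 T,
      |u k| ≤ (1 / κ) * (∑ j ∈ Finset.Icc 1 (T + 1), |u j - u (j - 1)| ^ p) ^ (1 / p) := by
  intro k hk
  obtain ⟨hk1, hkT⟩ := mem_Icc.1 hk
  have hκ : κ = sobolevConst T p := hκ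
  have hκ0 : 0 < κ := hκ ▸ sobolevConst_pos T p
  have hκp : κ ^ p ≤ (k : ℝ) ^ (1 - p) + ((T + 1 - k : ℕ) : ℝ) ^ (1 - p) := by
    have hsum : k + (T + 1 - k) = T + 1 := by omega
    have := cast_div_two_rpow_add_le (q := 1 - p) (by linarith) (b := T + 1 - k) hk1 (by omega)
    rwa [hsum, ← sobolevConst_rpow T (by linarith), ← hκ] at this
  have hS := rpow_add_rpow_mul_abs_rpow_le_sum hp.le h0 hT1 hk1 (Nat.lt_succ_of_le hkT)
  rw [← Icc_add_one_left_eq_Ioc, zero_add] at hS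
  have hκu : (κ * |u k|) ^ p ≤ ∑ j ∈ Icc 1 (T + 1), |u j - u (j - 1)| ^ p := by
    rw [mul_rpow hκ0.le (abs_nonneg _)]
    exact (mul_le_mul_of_nonneg_right hκp (by positivity)).trans hS
  rw [one_div_mul_eq_div, le_div_iff₀ hκ0, mul_comm, one_div,
    le_rpow_inv_iff_of_pos (by positivity) (by positivity) (by linarith)]
  exact hκu

/-- inequality (2), [cit, Lemma 4].  For every `u ∈ H` one has
`max_{k ∈ ℤ[1,T]} |u k| ≤ (1/κ) · (∑_{k=1}^{T+1} |Δu(k-1)|^p)^{1/p}`. -/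
theorem discrete_sup_norm_le
    (T : ℕ) (hT : 2 ≤ T) (p : ℝ) (hp : 1 < p)
    (κ : ℝ)
    (hκ : κ = if Even T
      then ((2 / (T : ℝ)) ^ (p - 1) + (2 / ((T : ℝ) + 2)) ^ (p - 1)) ^ (1 / p)
      else 2 / ((T : ℝ) + 1) ^ ((p - 1) / p))
    (u : ℕ → ℝ) (h0 : u 0 = 0) (hT1 : u (T + 1) = 0) :
    ∀ k ∈ Finset.Icc 1 T,
      |u k| ≤ (1 / κ) * (∑ j ∈ Finset.Icc 1 (T + 1), |u j - u (j - 1)| ^ p) ^ (1 / p) :=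
  discrete_sup_norm_le_general T p hp κ hκ u h0 hT1
end

section
/- The minimum over all u ∈ H with u not identically zero of the Rayleigh quotient (Σ_{k=1}^{T+1} (u(k) - u(k-1))^2) / (Σ_{k=1}^{T} u(k)^2) equals 4 sin^2(π / (2(T+1))). -/
/-!
Let `θ = π / (T + 1)` and `s k = sin (k θ)`. Then `s` vanishes at `0` and `T + 1`, is positive in
between, and `s (k - 1) + s (k + 1) = 2 cos θ · s k`, i.e. it is an eigenvector of the Dirichlet
Laplacian of the path with eigenvalue `2 - 2 cos θ = 4 sin² (θ / 2)`. Expanding the energy, the Rayleigh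
quotient of `u` is `2 - 2 ∑ u k u (k + 1) / ∑ u k ²`. Bounding each cross term by the weighted AM-GM
inequality `2 u k u (k + 1) ≤ t u k ² + t⁻¹ u (k + 1) ²` with the weight `t = s (k + 1) / s k` read off
the positive eigenvector, the recurrence for `s` collapses the sum of the right-hand sides to
`2 cos θ ∑ u k ²`. For `u = s` every AM-GM step is an equality.
-/

open Real Finset

theorem Finset.sum_Icc_one_eq_sum_range {M : Type*} [AddCommMonoid M] (f : ℕ → M) (n : ℕ) :
    ∑ k ∈ Icc 1 n, f k = ∑ i ∈ range n, f (i + 1) := by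
  rw [range_eq_Ico, sum_Ico_add' f 0 n 1, zero_add, Ico_add_one_right_eq_Icc]

theorem sum_sq_pos_of_ne_zero {ι : Type*} {s : Finset ι} {u : ι → ℝ} {k : ι} (hk : k ∈ s)
    (hu : u k ≠ 0) : 0 < ∑ i ∈ s, u i ^ 2 :=
  sum_pos' (fun _ _ => sq_nonneg _) ⟨k, hk, by positivity⟩

theorem two_mul_mul_le_mul_sq_add_inv_mul_sq {t : ℝ} (ht : 0 < t) (x y : ℝ) :
    2 * x * y ≤ t * x ^ 2 + t⁻¹ * y ^ 2 := by
  have h : t * x ^ 2 + t⁻¹ * y ^ 2 - 2 * x * y = t⁻¹ * (t * x - y) ^ 2 := by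
    field_simp
    ring
  rw [← sub_nonneg, h]
  positivity

theorem div_mul_sq_add_inv_div_mul_sq (a b : ℝ) :
    b / a * a ^ 2 + (b / a)⁻¹ * b ^ 2 = 2 * a * b := by
  rcases eq_or_ne a 0 with rfl | ha
  · simp
  rcases eq_or_ne b 0 with rfl | hb
  · simp
  field_simp
  ring

theorem four_mul_sin_sq_half (x : ℝ) : 4 * sin (x / 2) ^ 2 = 2 - 2 * cos x := by
  have h := cos_two_mul_eq_one_sub (x / 2)
  rw [mul_div_cancel₀ x two_ne_zero] at h
  linarith

theorem sum_Icc_sub_sq_eq {n : ℕ} {u : ℕ → ℝ} (h0 : u 0 = 0) (hn : u (n + 1) = 0) :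
    ∑ k ∈ Icc 1 (n + 1), (u k - u (k - 1)) ^ 2 =
      2 * ∑ k ∈ Icc 1 n, u k ^ 2 - 2 * ∑ i ∈ range n, u i * u (i + 1) := by
  simp only [sum_Icc_one_eq_sum_range, Nat.add_sub_cancel]
  have hexp : ∀ i ∈ range (n + 1),
      (u (i + 1) - u i) ^ 2 = u (i + 1) ^ 2 + u i ^ 2 - 2 * (u i * u (i + 1)) := by
    intro i _
    ring
  rw [sum_congr rfl hexp, sum_sub_distrib, sum_add_distrib, ← mul_sum,
    sum_range_succ (fun i => u (i + 1) ^ 2), sum_range_succ' (fun i => u i ^ 2),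
    sum_range_succ (fun i => u i * u (i + 1)), h0, hn]
  ring

/-- `s` is a positive eigenvector, with eigenvalue `2 - 2 c`, of the Dirichlet Laplacian of the path
`0, 1, …, n + 1`. -/
structure IsPosDirichletEigenfun (n : ℕ) (c : ℝ) (s : ℕ → ℝ) : Prop where
  zero_left : s 0 = 0
  zero_right : s (n + 1) = 0
  pos : ∀ k ∈ Icc 1 n, 0 < s k
  add_eq : ∀ i < n, s i + s (i + 2) = 2 * c * s (i + 1)

namespace IsPosDirichletEigenfun

variable {n : ℕ} {c : ℝ} {s : ℕ → ℝ}

theorem sum_ratio_mul_sq_eq (hs : IsPosDirichletEigenfun n c s) {u : ℕ → ℝ} (hu : u 0 = 0) :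
    ∑ i ∈ range n, (s (i + 1) / s i * u i ^ 2 + (s (i + 1) / s i)⁻¹ * u (i + 1) ^ 2) =
      2 * c * ∑ i ∈ range n, u (i + 1) ^ 2 := by
  have shift : ∑ i ∈ range n, s (i + 1) / s i * u i ^ 2 =
      ∑ i ∈ range n, s (i + 2) / s (i + 1) * u (i + 1) ^ 2 := by
    have h_top := sum_range_succ (fun i => s (i + 1) / s i * u i ^ 2) n
    have h_bot := sum_range_succ' (fun i => s (i + 1) / s i * u i ^ 2) n
    simp only [hs.zero_right, hu, zero_div, zero_mul, zero_pow two_ne_zero, mul_zero, add_zero]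
      at h_top h_bot
    exact h_top.symm.trans h_bot
  rw [sum_add_distrib, shift, ← sum_add_distrib, mul_sum]
  refine sum_congr rfl fun i hi => ?_
  have hi : i < n := mem_range.1 hi
  have hpos := hs.pos (i + 1) (mem_Icc.2 ⟨by omega, hi⟩)
  have hrec := hs.add_eq i hi
  rw [inv_div]
  field_simp
  linear_combination u (i + 1) ^ 2 * hrec

theorem sum_mul_le (hs : IsPosDirichletEigenfun n c s) {u : ℕ → ℝ} (hu : u 0 = 0) :
    ∑ i ∈ range n, u i * u (i + 1) ≤ c * ∑ i ∈ range n, u (i + 1) ^ 2 := by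
  have amgm : ∀ i ∈ range n, 2 * u i * u (i + 1) ≤
      s (i + 1) / s i * u i ^ 2 + (s (i + 1) / s i)⁻¹ * u (i + 1) ^ 2 := by
    intro i hi
    have hi : i < n := mem_range.1 hi
    rcases i.eq_zero_or_pos with rfl | hi0
    · simp [hu, hs.zero_left]
    exact two_mul_mul_le_mul_sq_add_inv_mul_sq (div_pos (hs.pos _ (mem_Icc.2 ⟨by omega, hi⟩))
      (hs.pos _ (mem_Icc.2 ⟨hi0, hi.le⟩))) _ _
  have h := sum_le_sum amgm
  rw [hs.sum_ratio_mul_sq_eq hu] at h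
  simp only [mul_assoc, ← mul_sum] at h
  linarith

theorem sum_mul_self_eq (hs : IsPosDirichletEigenfun n c s) :
    ∑ i ∈ range n, s i * s (i + 1) = c * ∑ i ∈ range n, s (i + 1) ^ 2 := by
  have h := hs.sum_ratio_mul_sq_eq hs.zero_left
  simp only [div_mul_sq_add_inv_div_mul_sq, mul_assoc, ← mul_sum] at h
  linarith

theorem mul_sum_sq_le_energy (hs : IsPosDirichletEigenfun n c s) {u : ℕ → ℝ} (h0 : u 0 = 0)
    (hn : u (n + 1) = 0) :
    (2 - 2 * c) * ∑ k ∈ Icc 1 n, u k ^ 2 ≤ ∑ k ∈ Icc 1 (n + 1), (u k - u (k - 1)) ^ 2 := by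
  rw [sum_Icc_sub_sq_eq h0 hn, sum_Icc_one_eq_sum_range]
  linarith [hs.sum_mul_le h0]

theorem energy_eq (hs : IsPosDirichletEigenfun n c s) :
    ∑ k ∈ Icc 1 (n + 1), (s k - s (k - 1)) ^ 2 = (2 - 2 * c) * ∑ k ∈ Icc 1 n, s k ^ 2 := by
  rw [sum_Icc_sub_sq_eq hs.zero_left hs.zero_right, sum_Icc_one_eq_sum_range, hs.sum_mul_self_eq]
  ring

end IsPosDirichletEigenfun

theorem isPosDirichletEigenfun_sin (n : ℕ) :
    IsPosDirichletEigenfun n (cos (π / (n + 1))) (fun k => sin (k * (π / (n + 1)))) := by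
  have hn : (n : ℝ) + 1 ≠ 0 := by positivity
  refine ⟨by simp, ?_, fun k hk => ?_, fun i _ => ?_⟩
  · push_cast
    rw [mul_div_cancel₀ _ hn, sin_pi]
  · have hk := mem_Icc.1 hk
    apply sin_pos_of_pos_of_lt_pi
    · have : (1 : ℝ) ≤ k := by exact_mod_cast hk.1
      positivity
    · calc (k : ℝ) * (π / (n + 1)) < (n + 1) * (π / (n + 1)) := by
            gcongr
            exact_mod_cast Nat.lt_succ_of_le hk.2
        _ = π := mul_div_cancel₀ _ hn
  · set θ := π / (n + 1)
    push_cast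
    rw [show (i : ℝ) * θ = (i + 1) * θ - θ by ring, show ((i : ℝ) + 2) * θ = (i + 1) * θ + θ by ring,
      sin_sub, sin_add]
    ring

/-- The minimum over nonzero `u ∈ H` of the Rayleigh quotient
`(∑_{k=1}^{T+1} (Δu(k-1))²)/(∑_{k=1}^T u(k)²)` equals `4 sin²(π/(2(T+1)))`. -/
theorem discrete_first_eigenvalue
    (T : ℕ) (hT : 2 ≤ T) :
    IsLeast
      {r : ℝ | ∃ u : ℕ → ℝ, u 0 = 0 ∧ u (T + 1) = 0 ∧
        (∃ k ∈ Finset.Icc 1 T, u k ≠ 0) ∧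
        r = (∑ k ∈ Finset.Icc 1 (T + 1), (u k - u (k - 1)) ^ 2) /
            (∑ k ∈ Finset.Icc 1 T, (u k) ^ 2)}
      (4 * Real.sin (Real.pi / (2 * ((T : ℝ) + 1))) ^ 2) := by
  have hs := isPosDirichletEigenfun_sin T
  have hhalf : π / (2 * ((T : ℝ) + 1)) = π / (T + 1) / 2 := by
    rw [div_div, mul_comm]
  rw [hhalf, four_mul_sin_sq_half]
  have h1 : 1 ∈ Icc 1 T := mem_Icc.2 ⟨le_rfl, by omega⟩
  refine ⟨⟨fun k => sin (k * (π / (T + 1))), hs.zero_left, hs.zero_right,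
    ⟨1, h1, (hs.pos 1 h1).ne'⟩, ?_⟩, ?_⟩
  · rw [hs.energy_eq, mul_div_cancel_right₀ _ (sum_sq_pos_of_ne_zero h1 (hs.pos 1 h1).ne').ne']
  · rintro r ⟨u, h0, hT1, ⟨k, hk, hku⟩, rfl⟩
    rw [le_div_iff₀ (sum_sq_pos_of_ne_zero hk hku)]
    exact hs.mul_sum_sq_le_energy h0 hT1
end

section
/- For every real α > 4 sin^2(π / (2(T+1))), there exists a function u : {0, 1, ..., T+1} → ℝ with u(0) = u(T+1) = 0 and u(k) > 0 for all k ∈ {1, ..., T}, such that -(u(k+1) - 2u(k) + u(k-1)) = α · u(k) / (1 + u(k)^2) for all k ∈ {1, ..., T}. -/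
/-!
Solutions are the critical points of `J u = ½ ∑ (u (k + 1) - u k)² - (α / 2) ∑ log (1 + u k ²)`
over the `u` vanishing at `0` and `T + 1`. Since `log (1 + x²) ≤ 2 |x|` grows sublinearly, `J`
is coercive and has a global minimiser, which may be taken nonnegative because
`J |u| ≤ J u`. Testing `J` on `ε sin (k π / (T + 1))` with `ε` small shows `min J < 0` as soon as
`α` exceeds the first eigenvalue `4 sin² (π / (2 (T + 1))) = 2 - 2 cos (π / (T + 1))` of the
discrete Laplacian, so the minimiser is not zero; a nonnegative solution vanishing at one
interior node vanishes at all of them, so it is positive.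
-/

open Real Finset Filter

namespace Real

lemma mul_one_sub_le_log_one_add {x : ℝ} (hx : 0 ≤ x) : x * (1 - x) ≤ log (1 + x) := by
  have hlog := one_sub_inv_le_log_of_pos (by positivity : 0 < 1 + x)
  have : x * (1 - x) ≤ 1 - (1 + x)⁻¹ := by
    rw [show 1 - (1 + x)⁻¹ = x / (1 + x) by field_simp; ring, le_div_iff₀ (by positivity)]
    nlinarith [sq_nonneg x]
  linarith

lemma log_one_add_sq_le_two_mul_abs (x : ℝ) : log (1 + x ^ 2) ≤ 2 * |x| := by
  rw [log_le_iff_le_exp (by positivity)]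
  calc 1 + x ^ 2 ≤ (|x| + 1) ^ 2 := by nlinarith [abs_nonneg x, sq_abs x]
    _ ≤ exp |x| ^ 2 := by gcongr; exact add_one_le_exp _
    _ = exp (2 * |x|) := by rw [← exp_nat_mul]; norm_num

lemma hasDerivAt_log_one_add_sq (x : ℝ) :
    HasDerivAt (fun x => log (1 + x ^ 2)) (2 * (x / (1 + x ^ 2))) x := by
  convert ((hasDerivAt_pow 2 x).const_add 1).log (by positivity) using 1
  field_simp
  norm_num

end Real

namespace DiscreteDirichlet

variable {T : ℕ}

/-- `v i` is the value at the node `i + 1`; the nodes `0` and `T + 1` carry the Dirichlet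
boundary condition. -/
def extendByZero (v : Fin T → ℝ) (k : ℕ) : ℝ :=
  if h : 1 ≤ k ∧ k ≤ T then v ⟨k - 1, by omega⟩ else 0

def secondDiff (u : ℕ → ℝ) (k : ℕ) : ℝ := u (k + 1) - 2 * u k + u (k - 1)

noncomputable def energy (T : ℕ) (G : ℝ → ℝ) (u : ℕ → ℝ) : ℝ :=
  (∑ k ∈ range (T + 1), (u (k + 1) - u k) ^ 2) / 2 - ∑ k ∈ Icc 1 T, G (u k)

@[simp] lemma extendByZero_zero (v : Fin T → ℝ) : extendByZero v 0 = 0 := by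
  simp [extendByZero]

@[simp] lemma extendByZero_top (v : Fin T → ℝ) : extendByZero v (T + 1) = 0 := by
  simp [extendByZero]

@[simp] lemma extendByZero_succ (v : Fin T → ℝ) (i : Fin T) : extendByZero v (i + 1) = v i := by
  simp [extendByZero, Nat.succ_le_of_lt i.2]

lemma extendByZero_add_smul (v w : Fin T → ℝ) (t : ℝ) :
    extendByZero (v + t • w) = extendByZero v + t • extendByZero w := by
  ext k; simp only [extendByZero, Pi.add_apply, Pi.smul_apply, smul_eq_mul]
  split_ifs <;> simp

lemma extendByZero_single (i : Fin T) (c : ℝ) :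
    extendByZero (Pi.single i c) = Pi.single (i + 1 : ℕ) c := by
  ext k; unfold extendByZero
  split_ifs with h
  · simp only [Pi.single_apply, Fin.ext_iff, show k - 1 = (i : ℕ) ↔ k = i + 1 by omega]
  · rw [Pi.single_apply, if_neg (by omega)]

lemma extendByZero_abs (v : Fin T → ℝ) (k : ℕ) :
    extendByZero (fun i => |v i|) k = |extendByZero v k| := by
  unfold extendByZero; split_ifs <;> simp

lemma extendByZero_nonneg {v : Fin T → ℝ} (hv : ∀ i, 0 ≤ v i) (k : ℕ) :
    0 ≤ extendByZero v k := by
  unfold extendByZero; split_ifs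
  exacts [hv _, le_rfl]

@[fun_prop] lemma continuous_extendByZero_apply (k : ℕ) :
    Continuous fun v : Fin T → ℝ => extendByZero v k := by
  unfold extendByZero; split_ifs
  exacts [continuous_apply _, continuous_const]

lemma extendByZero_restrict {u : ℕ → ℝ} (h0 : u 0 = 0) (hT : u (T + 1) = 0) {k : ℕ}
    (hk : k ≤ T + 1) : extendByZero (fun i : Fin T => u (i + 1)) k = u k := by
  unfold extendByZero
  split_ifs with h
  · simp only [Nat.sub_add_cancel h.1]
  · obtain rfl | rfl : k = 0 ∨ k = T + 1 := by omega
    exacts [h0.symm, hT.symm]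

lemma sum_sub_mul_sub_eq (u e : ℕ → ℝ) (n : ℕ) :
    ∑ k ∈ range (n + 1), (u (k + 1) - u k) * (e (k + 1) - e k)
      = (u (n + 1) - u n) * e (n + 1) - (u 1 - u 0) * e 0
        - ∑ k ∈ Icc 1 n, e k * secondDiff u k := by
  induction n with
  | zero => rw [sum_range_one, Icc_eq_empty_of_lt zero_lt_one, sum_empty]; ring
  | succ n ih =>
    rw [sum_range_succ, ih, sum_Icc_succ_top (by omega), secondDiff, Nat.add_sub_cancel]
    ring

lemma sum_sub_mul_sub_eq_neg_sum_mul_secondDiff (u : ℕ → ℝ) {e : ℕ → ℝ} (h0 : e 0 = 0)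
    (hT : e (T + 1) = 0) :
    ∑ k ∈ range (T + 1), (u (k + 1) - u k) * (e (k + 1) - e k)
      = -∑ k ∈ Icc 1 T, e k * secondDiff u k := by
  rw [sum_sub_mul_sub_eq, h0, hT]; ring

lemma sq_le_mul_sum_sq_sub {u : ℕ → ℝ} (h0 : u 0 = 0) {k n : ℕ} (hk : k ≤ n) :
    u k ^ 2 ≤ n * ∑ i ∈ range n, (u (i + 1) - u i) ^ 2 := by
  have htel : u k = ∑ i ∈ range k, (u (i + 1) - u i) := by
    rw [sum_range_sub, h0, sub_zero]
  calc u k ^ 2 ≤ #(range k) * ∑ i ∈ range k, (u (i + 1) - u i) ^ 2 :=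
        htel ▸ sq_sum_le_card_mul_sum_sq
    _ ≤ n * ∑ i ∈ range n, (u (i + 1) - u i) ^ 2 := by
        rw [card_range]
        gcongr

lemma norm_sq_le_mul_sum_sq_sub (v : Fin T → ℝ) :
    ‖v‖ ^ 2 ≤ (T + 1) * ∑ k ∈ range (T + 1), (extendByZero v (k + 1) - extendByZero v k) ^ 2 := by
  have hsq : ∀ i, ‖v i‖ ≤ √((T + 1) * ∑ k ∈ range (T + 1),
      (extendByZero v (k + 1) - extendByZero v k) ^ 2) := fun i => by
    rw [Real.norm_eq_abs, ← extendByZero_succ v i]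
    refine Real.abs_le_sqrt ?_
    exact_mod_cast sq_le_mul_sum_sq_sub (extendByZero_zero v) (by omega : (i : ℕ) + 1 ≤ T + 1)
  have := (pi_norm_le_iff_of_nonneg (Real.sqrt_nonneg _)).2 hsq
  calc ‖v‖ ^ 2 ≤ _ := pow_le_pow_left₀ (norm_nonneg v) this 2
    _ = _ := Real.sq_sqrt (by positivity)

variable {G : ℝ → ℝ}

lemma energy_congr {u u' : ℕ → ℝ} (h : ∀ k ≤ T + 1, u k = u' k) : energy T G u = energy T G u' := by
  have hkin : ∀ k ∈ range (T + 1), (u (k + 1) - u k) ^ 2 = (u' (k + 1) - u' k) ^ 2 :=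
    fun k hk => by rw [h k (by simp at hk; omega), h (k + 1) (by simp at hk; omega)]
  have hpot : ∀ k ∈ Icc 1 T, G (u k) = G (u' k) := fun k hk => by
    rw [h k (by simp at hk; omega)]
  simp only [energy, sum_congr rfl hkin, sum_congr rfl hpot]

lemma continuous_energy_extendByZero (hG : Continuous G) :
    Continuous fun v : Fin T → ℝ => energy T G (extendByZero v) := by
  unfold energy
  fun_prop

lemma energy_extendByZero_abs_le (hG : ∀ x, G |x| = G x) (v : Fin T → ℝ) :
    energy T G (extendByZero fun i => |v i|) ≤ energy T G (extendByZero v) := by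
  simp only [energy, extendByZero_abs, hG]
  gcongr ?_ / 2 - _
  exact sum_le_sum fun k _ => sq_le_sq.2 (abs_abs_sub_abs_le _ _)

lemma sub_mul_le_energy_extendByZero {c : ℝ} (hc : 0 ≤ c) (hG : ∀ x, G x ≤ c * |x|)
    (v : Fin T → ℝ) :
    ‖v‖ ^ 2 / (2 * (T + 1)) - T * c * ‖v‖ ≤ energy T G (extendByZero v) := by
  have hpot : ∑ k ∈ Icc 1 T, G (extendByZero v k) ≤ T * c * ‖v‖ := by
    calc ∑ k ∈ Icc 1 T, G (extendByZero v k) ≤ ∑ k ∈ Icc 1 T, c * ‖v‖ := by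
          gcongr with k hk
          refine (hG _).trans (mul_le_mul_of_nonneg_left ?_ hc)
          obtain ⟨h1, h2⟩ := mem_Icc.1 hk
          obtain ⟨i, rfl⟩ : ∃ i : Fin T, (i : ℕ) + 1 = k :=
            ⟨⟨k - 1, by omega⟩, Nat.sub_add_cancel h1⟩
          rw [extendByZero_succ]
          exact norm_le_pi_norm v i
      _ = T * c * ‖v‖ := by
          simp only [sum_const, Nat.card_Icc, add_tsub_cancel_right, nsmul_eq_mul]; ring
  have hkin : ‖v‖ ^ 2 / (2 * (T + 1))
      ≤ (∑ k ∈ range (T + 1), (extendByZero v (k + 1) - extendByZero v k) ^ 2) / 2 := by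
    rw [div_le_div_iff₀ (by positivity) two_pos]
    nlinarith [norm_sq_le_mul_sum_sq_sub v]
  unfold energy
  linarith

lemma tendsto_energy_extendByZero_cocompact {c : ℝ} (hc : 0 ≤ c) (hG : ∀ x, G x ≤ c * |x|) :
    Tendsto (fun v : Fin T → ℝ => energy T G (extendByZero v)) (cocompact _) atTop := by
  have hquad : Tendsto (fun r : ℝ => r ^ 2 / (2 * (T + 1)) - T * c * r) atTop atTop := by
    have := tendsto_id.atTop_mul_atTop₀ <| tendsto_atTop_add_const_right _ (-(T * c))
      (tendsto_id.atTop_div_const (by positivity : (0 : ℝ) < 2 * (T + 1)))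
    refine this.congr fun r => ?_
    simp only [id]; ring
  exact tendsto_atTop_mono (sub_mul_le_energy_extendByZero hc hG)
    (hquad.comp tendsto_norm_cocompact_atTop)

lemma exists_nonneg_forall_energy_extendByZero_le (hG : Continuous G) (hGeven : ∀ x, G |x| = G x)
    {c : ℝ} (hc : 0 ≤ c) (hGle : ∀ x, G x ≤ c * |x|) :
    ∃ v : Fin T → ℝ, (∀ i, 0 ≤ v i) ∧
      ∀ w : Fin T → ℝ, energy T G (extendByZero v) ≤ energy T G (extendByZero w) := by
  obtain ⟨v, hv⟩ := (continuous_energy_extendByZero hG).exists_forall_le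
    (tendsto_energy_extendByZero_cocompact hc hGle)
  exact ⟨fun i => |v i|, fun i => abs_nonneg _,
    fun w => (energy_extendByZero_abs_le hGeven v).trans (hv w)⟩

lemma hasDerivAt_energy_add_smul {g : ℝ → ℝ} (hG : ∀ x, HasDerivAt G (g x) x) (u : ℕ → ℝ)
    {e : ℕ → ℝ} (h0 : e 0 = 0) (hT : e (T + 1) = 0) :
    HasDerivAt (fun t : ℝ => energy T G (u + t • e))
      (-∑ k ∈ Icc 1 T, e k * (secondDiff u k + g (u k))) 0 := by
  have hline : ∀ k, HasDerivAt (fun t : ℝ => u k + t * e k) (e k) 0 := fun k => by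
    simpa using ((hasDerivAt_id (0 : ℝ)).mul_const (e k)).const_add (u k)
  have hkin : ∀ k ∈ range (T + 1), HasDerivAt
      (fun t : ℝ => ((u + t • e) (k + 1) - (u + t • e) k) ^ 2)
      (2 * ((u (k + 1) - u k) * (e (k + 1) - e k))) 0 := fun k _ => by
    refine (((hline (k + 1)).sub (hline k)).fun_pow 2).congr_deriv ?_
    simp only [Nat.cast_ofNat, Pi.sub_apply, zero_mul, add_zero, Nat.add_one_sub_one, pow_one]
    ring
  have hpot : ∀ k ∈ Icc 1 T, HasDerivAt (fun t : ℝ => G ((u + t • e) k)) (g (u k) * e k) 0 :=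
    fun k _ => by
      simpa [Function.comp_def] using (hG (u k)).comp_of_eq 0 (hline k) (by simp)
  refine (((HasDerivAt.fun_sum hkin).div_const 2).sub (HasDerivAt.fun_sum hpot)).congr_deriv ?_
  rw [← mul_sum, mul_div_cancel_left₀ _ two_ne_zero,
    sum_sub_mul_sub_eq_neg_sum_mul_secondDiff u h0 hT]
  simp only [mul_add, sum_add_distrib, mul_comm (g _)]
  ring

lemma neg_secondDiff_eq_of_forall_le {g : ℝ → ℝ} (hG : ∀ x, HasDerivAt G (g x) x)
    {v : Fin T → ℝ}
    (hmin : ∀ w : Fin T → ℝ, energy T G (extendByZero v) ≤ energy T G (extendByZero w))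
    {j : ℕ} (hj : j ∈ Icc 1 T) :
    -secondDiff (extendByZero v) j = g (extendByZero v j) := by
  obtain ⟨h1, h2⟩ := mem_Icc.1 hj
  obtain ⟨i, rfl⟩ : ∃ i : Fin T, (i : ℕ) + 1 = j := ⟨⟨j - 1, by omega⟩, Nat.sub_add_cancel h1⟩
  have hderiv := hasDerivAt_energy_add_smul (T := T) hG (extendByZero v)
    (e := Pi.single (i + 1 : ℕ) 1) (by simp) (Pi.single_eq_of_ne (by omega) _)
  have hlocal :
      IsLocalMin (fun t : ℝ => energy T G (extendByZero v + t • Pi.single (i + 1 : ℕ) 1)) 0 :=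
    Eventually.of_forall fun t => by
      simpa [← extendByZero_single, ← extendByZero_add_smul] using hmin (v + t • Pi.single i 1)
  have := hlocal.hasDerivAt_eq_zero hderiv
  simp only [Pi.single_apply, ite_mul, one_mul, zero_mul, sum_ite_eq', if_pos hj] at this
  linarith

/-- Discrete strong maximum principle: where a nonnegative `u` vanishes, `secondDiff u = 0`
forces both neighbours to vanish too. -/
lemma eq_zero_of_nonneg_of_eq_zero {u : ℕ → ℝ} (hu : ∀ k, 0 ≤ u k)
    (hprop : ∀ k ∈ Icc 1 T, u k = 0 → secondDiff u k = 0) {j : ℕ} (hj : j ∈ Icc 1 T)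
    (huj : u j = 0) {k : ℕ} (hk : k ≤ T + 1) : u k = 0 := by
  have hnbr : ∀ m ∈ Icc 1 T, u m = 0 → u (m - 1) = 0 ∧ u (m + 1) = 0 := fun m hm h => by
    have := hprop m hm h
    rw [secondDiff, h] at this
    constructor <;> linarith [hu (m - 1), hu (m + 1)]
  obtain ⟨hj1, hjT⟩ := mem_Icc.1 hj
  rcases le_total k j with hkj | hjk
  · induction hkj using Nat.decreasingInduction with
    | self => exact huj
    | of_succ m hmj ih =>
      simpa using (hnbr (m + 1) (mem_Icc.2 ⟨by omega, by omega⟩) (ih (by omega))).1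
  · induction k, hjk using Nat.le_induction with
    | base => exact huj
    | succ m hjm ih => exact (hnbr m (mem_Icc.2 ⟨by omega, by omega⟩) (ih (by omega))).2

lemma secondDiff_sin (θ : ℝ) {k : ℕ} (hk : 1 ≤ k) :
    secondDiff (fun k : ℕ => sin (k * θ)) k = -(2 - 2 * cos θ) * sin (k * θ) := by
  have hadd : ((k + 1 : ℕ) : ℝ) * θ = k * θ + θ := by push_cast; ring
  have hsub : ((k - 1 : ℕ) : ℝ) * θ = k * θ - θ := by rw [Nat.cast_sub hk]; push_cast; ring
  simp only [secondDiff, hadd, hsub, sin_add, sin_sub]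
  ring

/-- The test function is a small multiple of `k ↦ sin (k π / (T + 1))`, the first Dirichlet
eigenfunction of `-secondDiff`, with eigenvalue `2 - 2 cos (π / (T + 1))`. -/
lemma exists_energy_log_neg (hT : 1 ≤ T) {α : ℝ} (hα : 2 - 2 * cos (π / (T + 1)) < α) :
    ∃ v : Fin T → ℝ, energy T (fun x => α / 2 * log (1 + x ^ 2)) (extendByZero v) < 0 := by
  set θ := π / (T + 1) with hθ
  set lam := 2 - 2 * cos θ
  have hlam0 : 0 ≤ lam := by linarith [cos_le_one θ]
  have hα0 : 0 < α := by linarith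
  set φ : ℕ → ℝ := fun k => sin (k * θ)
  have hφ0 : φ 0 = 0 := by simp [φ]
  have hφT : φ (T + 1) = 0 := by
    simp only [φ, hθ]
    rw [show ((T + 1 : ℕ) : ℝ) * (π / (T + 1)) = π by push_cast; field_simp, sin_pi]
  set S := ∑ k ∈ Icc 1 T, φ k ^ 2 with hSdef
  have hS : 0 < S := by
    have hθπ : θ < π := div_lt_self pi_pos (by norm_cast; omega)
    have : 0 < φ 1 ^ 2 := by
      have := sin_pos_of_pos_of_lt_pi (by positivity) hθπ
      simp only [φ, Nat.cast_one, one_mul]; positivity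
    exact this.trans_le (single_le_sum (fun k _ => sq_nonneg (φ k)) (mem_Icc.2 ⟨le_rfl, hT⟩))
  have hkin : ∑ k ∈ range (T + 1), (φ (k + 1) - φ k) ^ 2 = lam * S := by
    rw [hSdef, mul_sum]
    simp only [sq, sum_sub_mul_sub_eq_neg_sum_mul_secondDiff φ hφ0 hφT, ← sum_neg_distrib]
    refine sum_congr rfl fun k hk => ?_
    rw [secondDiff_sin θ (mem_Icc.1 hk).1]
    ring
  set ε := √((α - lam) / (2 * α))
  have hε : ε ^ 2 = (α - lam) / (2 * α) := sq_sqrt (div_nonneg (by linarith) (by positivity))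
  have hεpos : 0 < ε ^ 2 := by rw [hε]; exact div_pos (by linarith) (by positivity)
  have hpot : ∀ k ∈ Icc 1 T, ε ^ 2 * (1 - ε ^ 2) * φ k ^ 2 ≤ log (1 + (ε * φ k) ^ 2) := by
    intro k _
    have hφ1 : φ k ^ 2 ≤ 1 := sin_sq_le_one _
    have hlog := mul_one_sub_le_log_one_add (sq_nonneg (ε * φ k))
    have : 0 ≤ ε ^ 2 * φ k ^ 2 * ε ^ 2 * (1 - φ k ^ 2) := by
      have := sub_nonneg.2 hφ1; positivity
    linarith
  refine ⟨fun i => ε * φ (i + 1), ?_⟩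
  rw [energy_congr fun k hk =>
    extendByZero_restrict (u := fun k => ε * φ k) (by simp [hφ0]) (by simp [hφT]) hk]
  calc energy T (fun x => α / 2 * log (1 + x ^ 2)) (fun k => ε * φ k)
      = ε ^ 2 * (lam * S) / 2 - ∑ k ∈ Icc 1 T, α / 2 * log (1 + (ε * φ k) ^ 2) := by
        simp only [energy, ← mul_sub, mul_pow, ← mul_sum, hkin]
    _ ≤ ε ^ 2 * (lam * S) / 2 - ∑ k ∈ Icc 1 T, α / 2 * (ε ^ 2 * (1 - ε ^ 2) * φ k ^ 2) := by
        gcongr with k hk; exact hpot k hk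
    _ = ε ^ 2 * S / 2 * (lam - α + α * ε ^ 2) := by rw [← mul_sum, ← mul_sum]; ring
    _ < 0 := by
        refine mul_neg_of_pos_of_neg (div_pos (mul_pos hεpos hS) two_pos) ?_
        have : α * ((α - lam) / (2 * α)) = (α - lam) / 2 := by field_simp
        rw [hε, this]
        linarith

end DiscreteDirichlet

open DiscreteDirichlet in
/-- Example `esempio0`.  For every `α > 4 sin²(π/(2(T+1)))` the
second-order discrete problem `-Δ²u(k-1) = α u(k)/(1+u(k)²)`, `u 0 = u (T+1) = 0`, has at
least one positive solution. -/
theorem example_second_order_existence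
    (T : ℕ) (hT : 2 ≤ T)
    (α : ℝ) (hα : 4 * Real.sin (Real.pi / (2 * ((T : ℝ) + 1))) ^ 2 < α) :
    ∃ u : ℕ → ℝ, u 0 = 0 ∧ u (T + 1) = 0 ∧
      (∀ k ∈ Finset.Icc 1 T, 0 < u k) ∧
      (∀ k ∈ Finset.Icc 1 T,
        -(u (k + 1) - 2 * u k + u (k - 1)) = α * (u k / (1 + (u k) ^ 2))) := by
  have hα0 : 0 < α := lt_of_le_of_lt (by positivity) hα
  have hderiv (x : ℝ) : HasDerivAt (fun x => α / 2 * log (1 + x ^ 2)) (α * (x / (1 + x ^ 2))) x :=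
    ((hasDerivAt_log_one_add_sq x).const_mul _).congr_deriv (by ring)
  obtain ⟨v, hv0, hmin⟩ := exists_nonneg_forall_energy_extendByZero_le (T := T)
    (G := fun x => α / 2 * log (1 + x ^ 2))
    (by fun_prop (disch := intro x; positivity)) (fun x => by rw [sq_abs]) hα0.le
    (fun x => by nlinarith [log_one_add_sq_le_two_mul_abs x])
  have heq (k : ℕ) (hk : k ∈ Icc 1 T) :
      -secondDiff (extendByZero v) k = α * (extendByZero v k / (1 + extendByZero v k ^ 2)) :=
    neg_secondDiff_eq_of_forall_le hderiv hmin hk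
  refine ⟨extendByZero v, extendByZero_zero v, extendByZero_top v, fun k hk => ?_, heq⟩
  refine (extendByZero_nonneg hv0 k).lt_of_ne' fun hk0 => ?_
  have hzero (j : ℕ) (hj : j ≤ T + 1) : extendByZero v j = 0 :=
    eq_zero_of_nonneg_of_eq_zero (extendByZero_nonneg hv0)
      (fun m hm h => by simpa [h] using heq m hm) hk hk0 hj
  have hlam : 4 * sin (π / (2 * (T + 1))) ^ 2 = 2 - 2 * cos (π / (T + 1)) := by
    rw [show π / (T + 1) = 2 * (π / (2 * (T + 1))) by field_simp, cos_two_mul_eq_one_sub]; ring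
  obtain ⟨w, hw⟩ := exists_energy_log_neg (by omega) (hlam ▸ hα)
  have : energy T (fun x => α / 2 * log (1 + x ^ 2)) (extendByZero v) = 0 := by
    rw [energy_congr (u' := 0) hzero]; simp [energy]
  linarith [hmin w]
end
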